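/- arXiv:1403.5510 — 5 statements merged into one kernel-verified Lean document; each statement's English description precedes it below -/
import Mathlib

section
/- Assume the sequence (b_h) is constant with value b ≠ 0 and that R_{ℓ_0} = 0 for some ℓ_0 ∈ ℤ. Then the number R_{ℓ_0,2} = Σ' b/R_{k·2^h+ℓ_0} (summation over h ≥ 0 with k·2^h+ℓ_0 ≥ 0 and R_{k·2^h+ℓ_0} ≠ 0) is an algebraic number. -/
/-!
From `R_{ℓ₀} = 0` one gets `R_{m+ℓ₀} = c (γ₁^m - γ₂^m)` with `c = g₁ γ₁^{ℓ₀}`, and for even `m`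
the relation `(γ₁γ₂)² = 1` gives `γ₂^m = γ₁^{-m}`. Hence, for `h ≥ N ≥ 1`, the `h`-th term is
`(b/c) / (z - z⁻¹)` with `z = y^{2^{h-N}}`, `y = γ₁^{k 2^N}`. Since
`1/(z - z⁻¹) = 1/(z - 1) - 1/(z² - 1)`, the tail telescopes to `(b/c)/(y - 1)`, so the whole
series is a finite sum of algebraic numbers plus an algebraic number.
-/

section Field

variable {K : Type*} [Field K]

theorem pow_eq_inv_pow_of_sq_mul_eq_one {a b : K} (h : (a * b) ^ 2 = 1) {m : ℕ} (hm : Even m) :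
    b ^ m = (a ^ m)⁻¹ := by
  obtain ⟨j, rfl⟩ := hm
  refine eq_inv_of_mul_eq_one_right ?_
  rw [← mul_pow, ← two_mul, pow_mul, h, one_pow]

theorem mul_zpow_natCast_add_add_mul_zpow_natCast_add_of_even {a₁ a₂ g₁ g₂ : K} (ha₁ : a₁ ≠ 0)
    (ha₂ : a₂ ≠ 0) (ha : (a₁ * a₂) ^ 2 = 1) {l : ℤ} (hl : g₁ * a₁ ^ l + g₂ * a₂ ^ l = 0) {m : ℕ}
    (hm : Even m) :
    g₁ * a₁ ^ ((m : ℤ) + l) + g₂ * a₂ ^ ((m : ℤ) + l) = g₁ * a₁ ^ l * (a₁ ^ m - (a₁ ^ m)⁻¹) := by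
  rw [zpow_add₀ ha₁, zpow_add₀ ha₂, zpow_natCast, zpow_natCast,
    ← pow_eq_inv_pow_of_sq_mul_eq_one ha hm]
  linear_combination a₂ ^ m * hl

theorem ite_and_ne_zero_div_eq_div {p : Prop} {r : K} [Decidable (p ∧ r ≠ 0)] (hp : p) (b : K) :
    (if p ∧ r ≠ 0 then b / r else 0) = b / r := by
  split_ifs with h
  · rfl
  · rw [not_ne_iff.mp fun hr => h ⟨hp, hr⟩, div_zero]

theorem inv_sub_inv_self_eq_inv_sub_one_sub_inv_sq_sub_one {y : K} (hy : y ^ 2 ≠ 1) :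
    (y - y⁻¹)⁻¹ = (y - 1)⁻¹ - (y ^ 2 - 1)⁻¹ := by
  rcases eq_or_ne y 0 with rfl | hy0
  · simp
  have hsub_one : y - 1 ≠ 0 := fun h => hy (by rw [sub_eq_zero.mp h, one_pow])
  have hsq_sub_one : y ^ 2 - 1 ≠ 0 := sub_ne_zero.mpr hy
  have hsub_inv : y - y⁻¹ ≠ 0 := fun h => hy (by field_simp at h; linear_combination h)
  field_simp
  ring

end Field

section Normed

variable {𝕜 : Type*} [NormedField 𝕜] {x : 𝕜}

theorem norm_inv_pow_two_pow_sub_one_le (hx : 1 < ‖x‖) (n : ℕ) :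
    ‖(x ^ 2 ^ n - 1)⁻¹‖ ≤ (‖x‖ - 1)⁻¹ * ‖x‖⁻¹ ^ n := by
  have hpow : 1 ≤ ‖x‖ ^ n := one_le_pow₀ hx.le
  have hle : ‖x‖ ^ (n + 1) ≤ ‖x‖ ^ 2 ^ n := pow_le_pow_right₀ hx.le Nat.lt_two_pow_self
  have hlb : ‖x‖ ^ n * (‖x‖ - 1) ≤ ‖x ^ 2 ^ n - 1‖ := by
    have := norm_sub_norm_le (x ^ 2 ^ n) 1
    rw [norm_pow, norm_one] at this
    nlinarith [pow_succ ‖x‖ n]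
  rw [norm_inv, inv_pow, ← mul_inv]
  exact inv_anti₀ (mul_pos (by positivity) (by linarith)) (by linarith)

variable [CompleteSpace 𝕜]

theorem summable_inv_pow_two_pow_sub_one (hx : 1 < ‖x‖) :
    Summable fun n : ℕ => (x ^ 2 ^ n - 1)⁻¹ :=
  .of_norm_bounded ((summable_geometric_of_lt_one (by positivity)
    (inv_lt_one_of_one_lt₀ hx)).mul_left _) (norm_inv_pow_two_pow_sub_one_le hx)

theorem hasSum_inv_pow_two_pow_sub_inv (hx : 1 < ‖x‖) :
    HasSum (fun n : ℕ => (x ^ 2 ^ n - (x ^ 2 ^ n)⁻¹)⁻¹) (x - 1)⁻¹ := by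
  have hu := (summable_inv_pow_two_pow_sub_one hx).hasSum
  have htel : HasSum (fun n : ℕ => (x ^ 2 ^ n - 1)⁻¹ - (x ^ 2 ^ (n + 1) - 1)⁻¹) (x - 1)⁻¹ := by
    simpa using hu.sub ((hasSum_nat_add_iff' 1).mpr hu)
  refine htel.congr_fun fun n => ?_
  have hsq : (x ^ 2 ^ n) ^ 2 ≠ 1 := fun h => by
    have := congrArg norm h
    rw [norm_one, norm_pow, norm_pow] at this
    exact (one_lt_pow₀ (one_lt_pow₀ hx (by positivity)) two_ne_zero).ne' this
  rw [inv_sub_inv_self_eq_inv_sub_one_sub_inv_sq_sub_one hsq, ← pow_mul, ← pow_succ]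

theorem tsum_mem_of_tail_eq {S : Type*} [SetLike S 𝕜] [SubfieldClass S 𝕜] {s : S}
    {f : ℕ → 𝕜} {a y : 𝕜} (N : ℕ) (hf : ∀ n, f n ∈ s) (ha : a ∈ s) (hy : y ∈ s)
    (hy1 : 1 < ‖y‖) (htail : ∀ n, f (n + N) = a * (y ^ 2 ^ n - (y ^ 2 ^ n)⁻¹)⁻¹) :
    ∑' n, f n ∈ s := by
  have htail_sum : HasSum (fun n => f (n + N)) (a * (y - 1)⁻¹) := by
    simpa only [htail] using (hasSum_inv_pow_two_pow_sub_inv hy1).mul_left a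
  have hsum : HasSum f (∑ i ∈ Finset.range N, f i + a * (y - 1)⁻¹) :=
    (hasSum_nat_add_iff' N).mp (by rwa [add_sub_cancel_left])
  rw [hsum.tsum_eq]
  exact add_mem (sum_mem fun i _ => hf i) (mul_mem ha (inv_mem (sub_mem hy (one_mem s))))

end Normed

theorem isAlgebraic_R_sum_constant_case_general
    (γ₁ γ₂ δ g₁ g₂ : ℂ)
    (hγ₁ : γ₁ ≠ 0) (hγ₂ : γ₂ ≠ 0)
    (hγ₁alg : IsAlgebraic ℚ γ₁) (hγ₂alg : IsAlgebraic ℚ γ₂)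
    (hg₁alg : IsAlgebraic ℚ g₁) (hg₂alg : IsAlgebraic ℚ g₂)
    (hγ₁abs : 1 < ‖γ₁‖)
    (hδ : γ₁ * γ₂ = δ) (hδ1 : δ = 1 ∨ δ = -1)
    (k : ℕ) (hk : 1 ≤ k)
    (b : ℂ) (hb_alg : IsAlgebraic ℚ b)
    (ℓ₀ : ℤ) (hℓ₀ : g₁ * γ₁ ^ ℓ₀ + g₂ * γ₂ ^ ℓ₀ = 0) :
    IsAlgebraic ℚ
      (∑' h : ℕ,
        if 0 ≤ (k * 2 ^ h + ℓ₀ : ℤ) ∧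
            g₁ * γ₁ ^ (k * 2 ^ h + ℓ₀ : ℤ) + g₂ * γ₂ ^ (k * 2 ^ h + ℓ₀ : ℤ) ≠ 0 then
          b / (g₁ * γ₁ ^ (k * 2 ^ h + ℓ₀ : ℤ) + g₂ * γ₂ ^ (k * 2 ^ h + ℓ₀ : ℤ))
        else 0) := by
  simp only [← mem_algebraicClosure_iff] at *
  have hδsq : (γ₁ * γ₂) ^ 2 = 1 := by rcases hδ1 with rfl | rfl <;> simp [hδ]
  obtain ⟨N, hN⟩ : ∃ N, N = ℓ₀.natAbs + 1 := ⟨_, rfl⟩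
  refine tsum_mem_of_tail_eq N (a := b / (g₁ * γ₁ ^ ℓ₀)) (y := γ₁ ^ (k * 2 ^ N))
    (fun n => ?_) ?_ (pow_mem hγ₁alg _) ?_ (fun n => ?_)
  · split_ifs
    · exact div_mem hb_alg (add_mem (mul_mem hg₁alg (zpow_mem hγ₁alg _))
        (mul_mem hg₂alg (zpow_mem hγ₂alg _)))
    · exact zero_mem _
  · exact div_mem hb_alg (mul_mem hg₁alg (zpow_mem hγ₁alg _))
  · rw [norm_pow]
    exact one_lt_pow₀ hγ₁abs (by positivity)
  · have hcast : (k * 2 ^ (n + N) + ℓ₀ : ℤ) = ((k * 2 ^ (n + N) : ℕ) : ℤ) + ℓ₀ := by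
      push_cast; ring
    have hnonneg : 0 ≤ (k * 2 ^ (n + N) + ℓ₀ : ℤ) := by
      have : ℓ₀.natAbs < k * 2 ^ (n + N) :=
        (show ℓ₀.natAbs < n + N by omega).trans_le
          (Nat.lt_two_pow_self.le.trans (Nat.le_mul_of_pos_left _ hk))
      omega
    have heven : Even (k * 2 ^ (n + N)) := (Nat.even_pow.mpr ⟨even_two, by omega⟩).mul_left k
    have hpow : (γ₁ ^ (k * 2 ^ N)) ^ 2 ^ n = γ₁ ^ (k * 2 ^ (n + N)) := by
      rw [← pow_mul, pow_add]; ring_nf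
    rw [ite_and_ne_zero_div_eq_div hnonneg, hcast,
      mul_zpow_natCast_add_add_mul_zpow_natCast_add_of_even hγ₁ hγ₂ hδsq hℓ₀ heven, hpow,
      div_mul_eq_div_div, div_eq_mul_inv]

theorem isAlgebraic_R_sum_constant_case
    (γ₁ γ₂ δ g₁ g₂ : ℂ)
    (hγ₁ : γ₁ ≠ 0) (hγ₂ : γ₂ ≠ 0) (hg₁ : g₁ ≠ 0) (hg₂ : g₂ ≠ 0)
    (hγ₁alg : IsAlgebraic ℚ γ₁) (hγ₂alg : IsAlgebraic ℚ γ₂)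
    (hg₁alg : IsAlgebraic ℚ g₁) (hg₂alg : IsAlgebraic ℚ g₂)
    (hγ₁abs : 1 < ‖γ₁‖)
    (hδ : γ₁ * γ₂ = δ) (hδ1 : δ = 1 ∨ δ = -1)
    (k : ℕ) (hk : 1 ≤ k)
    (b : ℂ) (hb : b ≠ 0) (hb_alg : IsAlgebraic ℚ b)
    (ℓ₀ : ℤ) (hℓ₀ : g₁ * γ₁ ^ ℓ₀ + g₂ * γ₂ ^ ℓ₀ = 0) :
    IsAlgebraic ℚ
      (∑' h : ℕ,
        if 0 ≤ (k * 2 ^ h + ℓ₀ : ℤ) ∧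
            g₁ * γ₁ ^ (k * 2 ^ h + ℓ₀ : ℤ) + g₂ * γ₂ ^ (k * 2 ^ h + ℓ₀ : ℤ) ≠ 0 then
          b / (g₁ * γ₁ ^ (k * 2 ^ h + ℓ₀ : ℤ) + g₂ * γ₂ ^ (k * 2 ^ h + ℓ₀ : ℤ))
        else 0) :=
  isAlgebraic_R_sum_constant_case_general γ₁ γ₂ δ g₁ g₂ hγ₁ hγ₂ hγ₁alg hγ₂alg hg₁alg hg₂alg hγ₁abs
    hδ hδ1 k hk b hb_alg ℓ₀ hℓ₀
end

section
/- Let r ≥ 2 be an integer, a a non-zero complex number, and m ≥ 1. Let A_i, B_i ∈ ℂ[z]∖{0} (i = 0,…,m) with A_i(0) = 0 for all i, B_0 = 1, and, for each i = 1,…,m, A_i and B_i coprime and B_i non-constant monic, the polynomials B_1,…,B_m being pairwise distinct. Suppose that for each i = 1,…,m the polynomial B_i has exactly t_i distinct complex zeros, all of the same absolute value ω_i; suppose ω_1,…,ω_m are pairwise distinct, ω_m = 1, and, in case m ≥ 2, that (r−1)t_i ≥ t_j for every pair (i,j) with 1 ≤ i,j ≤ m−1. Define F_i(z) := Σ_{h≥0}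 a^h A_i(z^{r^h})/B_i(z^{r^h}) ∈ ℂ[[z]]. Then for any u_0,…,u_m ∈ ℂ, the power series u_0F_0(z) + u_1F_1(z) + ⋯ + u_mF_m(z) is rational if and only if u_1 = ⋯ = u_{m−1} = 0 and u_0F_0(z) + u_mF_m(z) is rational. -/
noncomputable section

/-- A formal power series is rational if it satisfies `Q·g = P` for polynomials `P, Q`, `Q ≠ 0`. -/
def IsRationalPS (g : PowerSeries ℂ) : Prop :=
  ∃ P Q : Polynomial ℂ, Q ≠ 0 ∧ (Q : PowerSeries ℂ) * g = (P : PowerSeries ℂ)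

/-- The formal sum of a sequence of power series, defined coefficientwise by a `tsum`
(which is a genuine finite sum in each coefficient, when the orders tend to infinity). -/
def seriesSum (t : ℕ → PowerSeries ℂ) : PowerSeries ℂ :=
  PowerSeries.mk fun n => ∑' h : ℕ, PowerSeries.coeff n (t h)

/-!
Each `F_i` satisfies `F_i(z) = A_i(z)/B_i(z) + a F_i(z^r)`, hence `F = ∑ u_i F_i` satisfies
`F(z) = R(z) + a F(z^r)` with `R = ∑ u_i A_i/B_i`, whose poles are the zeros of the `B_j` with
`u_j ≠ 0`. If `F` is rational, comparing pole orders shows that at each `ζ ≠ 0` never exactly one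
of `F` at `ζ`, `R` at `ζ` and `F` at `ζ^r` has a pole.

Suppose `u_i ≠ 0` for some `1 ≤ i < m`, and among such `i` take `i₀` with `|log ω_{i₀}|` maximal.
Then `R` has no pole of modulus `ω_{i₀}^{r^k}`, `k ≥ 1`, so a pole of `F` there would propagate to
infinitely many poles `ζ^{r^n}`; hence the zeros of `B_{i₀}` are poles of `F`. Passing to `r`-th
roots, the circle `|ζ|^{r^h} = ω_{i₀}` carries at least `t_{i₀}` poles of `F` for every `h`: of the
`r` times as many roots of the poles on the previous circle, at most `(r - 1) t_{i₀}` are poles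
of `R`. These circles are disjoint, but `F` has finitely many poles.
-/

open scoped Polynomial
open Finset

namespace PowerSeries

variable {k : Type*} [Field k]

theorem expand_inv (n : ℕ) (hn : n ≠ 0) (φ : PowerSeries k) :
    expand n hn φ⁻¹ = (expand n hn φ)⁻¹ := by
  by_cases hφ : constantCoeff φ = 0
  · rw [inv_eq_zero.mpr hφ, map_zero, eq_comm, inv_eq_zero, constantCoeff_expand, hφ]
  · rw [eq_inv_iff_mul_eq_one (by rwa [constantCoeff_expand]), ← map_mul,
      PowerSeries.inv_mul_cancel _ hφ, map_one]

theorem expand_coe {R : Type*} [CommRing R] (n : ℕ) (hn : n ≠ 0) (p : R[X]) :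
    expand n hn (p : PowerSeries R) = (Polynomial.expand R n p : PowerSeries R) := by
  ext m
  rw [coeff_expand, Polynomial.coeff_coe, Polynomial.coeff_coe,
    Polynomial.coeff_expand (Nat.pos_of_ne_zero hn)]

end PowerSeries

section FunctionalEquation

open PowerSeries

theorem coeff_seriesSum (t : ℕ → PowerSeries ℂ) (n : ℕ) :
    coeff n (seriesSum t) = ∑' h, coeff n (t h) :=
  coeff_mk _ _

theorem seriesSum_eq_add_seriesSum_succ {t : ℕ → PowerSeries ℂ}
    (ht : ∀ n h, n < h → coeff n (t h) = 0) :
    seriesSum t = t 0 + seriesSum fun h => t (h + 1) := by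
  ext n
  have hsum : Summable fun h => coeff n (t h) :=
    summable_of_ne_finset_zero (s := range (n + 1)) fun h hh => ht n h (by simpa using hh)
  rw [map_add, coeff_seriesSum, coeff_seriesSum, hsum.tsum_eq_zero_add]

theorem seriesSum_C_mul (c : ℂ) (t : ℕ → PowerSeries ℂ) :
    seriesSum (fun h => C c * t h) = C c * seriesSum t := by
  ext n
  simp only [coeff_seriesSum, coeff_C_mul, tsum_mul_left]

theorem expand_seriesSum (r : ℕ) (hr : r ≠ 0) (t : ℕ → PowerSeries ℂ) :
    expand r hr (seriesSum t) = seriesSum fun h => expand r hr (t h) := by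
  ext n
  simp only [coeff_expand, coeff_seriesSum]
  split_ifs <;> simp

def mahlerSum (r : ℕ) (hr : r ≠ 0) (a : ℂ) (g : PowerSeries ℂ) : PowerSeries ℂ :=
  seriesSum fun h => C (a ^ h) * expand (r ^ h) (pow_ne_zero h hr) g

theorem seriesSum_comp_eq_mahlerSum {r : ℕ} (hr : r ≠ 0) (a : ℂ) (A B : ℂ[X]) :
    seriesSum (fun h => C (a ^ h) * (A.comp (Polynomial.X ^ r ^ h) : PowerSeries ℂ) *
      ((B.comp (Polynomial.X ^ r ^ h) : PowerSeries ℂ))⁻¹) =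
      mahlerSum r hr a (A * (B : PowerSeries ℂ)⁻¹) := by
  unfold mahlerSum
  congr 1
  funext h
  rw [map_mul, expand_inv, expand_coe, expand_coe, mul_assoc]
  rfl

theorem mahlerSum_eq_add {r : ℕ} (hr : 2 ≤ r) (a : ℂ) {g : PowerSeries ℂ}
    (hg : constantCoeff g = 0) :
    mahlerSum r (by omega) a g = g + C a * expand r (by omega) (mahlerSum r (by omega) a g) := by
  have hr0 : r ≠ 0 := by omega
  have hsmall : ∀ n h, n < h → coeff n (C (a ^ h) * expand (r ^ h) (pow_ne_zero h hr0) g) = 0 := by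
    intro n h hnh
    have hlt : n < r ^ h := hnh.trans (Nat.lt_pow_self (by omega))
    rw [coeff_C_mul, coeff_expand]
    split_ifs with hdvd
    · rw [Nat.eq_zero_of_dvd_of_lt hdvd hlt, Nat.zero_div, coeff_zero_eq_constantCoeff_apply, hg,
        mul_zero]
    · rw [mul_zero]
  have hstep : ∀ h, C (a ^ (h + 1)) * expand (r ^ (h + 1)) (pow_ne_zero _ hr0) g =
      C a * expand r hr0 (C (a ^ h) * expand (r ^ h) (pow_ne_zero h hr0) g) := by
    intro h
    rw [map_mul, expand_C, ← expand_mul]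
    simp only [pow_succ', map_mul, mul_assoc]
  unfold mahlerSum
  conv_lhs => rw [seriesSum_eq_add_seriesSum_succ hsmall]
  simp only [hstep, seriesSum_C_mul, expand_seriesSum, pow_zero, map_one, one_mul, expand_one_apply]

variable {k : Type*} [Field k]

theorem sum_C_mul_eq_add_of_forall {ι : Type*} {s : Finset ι} {r : ℕ} (hr : r ≠ 0) {a : k}
    (u : ι → k) {F g : ι → PowerSeries k} (hF : ∀ i ∈ s, F i = g i + C a * expand r hr (F i)) :
    ∑ i ∈ s, C (u i) * F i =
      ∑ i ∈ s, C (u i) * g i + C a * expand r hr (∑ i ∈ s, C (u i) * F i) := by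
  rw [map_sum, mul_sum, ← sum_add_distrib]
  refine sum_congr rfl fun i hi => ?_
  rw [map_mul, expand_C]
  linear_combination C (u i) * hF i hi

theorem coe_prod_mul_sum_mul_inv {ι : Type*} [DecidableEq ι] (s : Finset ι) (p q : ι → k[X])
    (hq : ∀ i ∈ s, (q i).coeff 0 ≠ 0) :
    ((∏ i ∈ s, q i : k[X]) : PowerSeries k) *
        ∑ i ∈ s, (p i : PowerSeries k) * (q i : PowerSeries k)⁻¹ =
      ((∑ i ∈ s, p i * ∏ j ∈ s.erase i, q j : k[X]) : PowerSeries k) := by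
  have hsum := map_sum Polynomial.coeToPowerSeries.ringHom (fun i => p i * ∏ j ∈ s.erase i, q j) s
  simp only [Polynomial.coeToPowerSeries.ringHom_apply] at hsum
  rw [hsum, mul_sum]
  refine sum_congr rfl fun i hi => ?_
  have hqi : constantCoeff (q i : PowerSeries k) ≠ 0 := by
    rw [← coeff_zero_eq_constantCoeff_apply, Polynomial.coeff_coe]
    exact hq i hi
  rw [← mul_prod_erase s q hi, Polynomial.coe_mul, Polynomial.coe_mul]
  calc _ = (p i : PowerSeries k) * ((∏ j ∈ s.erase i, q j : k[X]) : PowerSeries k) *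
        ((q i : PowerSeries k) * (q i : PowerSeries k)⁻¹) := by ring
    _ = _ := by rw [PowerSeries.mul_inv_cancel _ hqi, mul_one]

theorem expand_mul_mul_eq_of_mul_eq {r : ℕ} (hr : r ≠ 0) {a : k} {F g : PowerSeries k}
    {N D P Q : k[X]} (hF : F = g + C a * expand r hr F) (hg : (D : PowerSeries k) * g = N)
    (hPQ : (Q : PowerSeries k) * F = P) :
    Polynomial.expand k r Q * D * P =
      Polynomial.expand k r Q * Q * N + Polynomial.C a * (D * Q * Polynomial.expand k r P) := by
  have hP' :
      (Polynomial.expand k r Q : PowerSeries k) * expand r hr F = Polynomial.expand k r P := by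
    rw [← expand_coe r hr, ← expand_coe r hr, ← map_mul, hPQ]
  apply Polynomial.coe_injective
  push_cast
  linear_combination (-(Polynomial.expand k r Q : PowerSeries k) * D) * hPQ
    + ((Polynomial.expand k r Q : PowerSeries k) * Q) * hg
    + (C a * D * Q) * hP' + ((Polynomial.expand k r Q : PowerSeries k) * D * Q) * hF

end FunctionalEquation

theorem exists_expand_mul_mul_eq_of_isRationalPS {ι : Type*} [DecidableEq ι] {r : ℕ} (hr : 2 ≤ r)
    (a : ℂ) {s : Finset ι} (u : ι → ℂ) {A B : ι → ℂ[X]} (hA : ∀ i ∈ s, (A i).coeff 0 = 0)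
    (hB : ∀ i ∈ s, (B i).coeff 0 ≠ 0)
    (hrat : IsRationalPS (∑ i ∈ s, PowerSeries.C (u i) * seriesSum fun h =>
      PowerSeries.C (a ^ h) * ((A i).comp (Polynomial.X ^ r ^ h) : PowerSeries ℂ) *
        ((B i).comp (Polynomial.X ^ r ^ h) : PowerSeries ℂ)⁻¹)) :
    ∃ P Q : ℂ[X], Q ≠ 0 ∧ Polynomial.expand ℂ r Q * (∏ i ∈ s, B i) * P =
      Polynomial.expand ℂ r Q * Q * (∑ i ∈ s, Polynomial.C (u i) * A i * ∏ j ∈ s.erase i, B j) +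
        Polynomial.C a * ((∏ i ∈ s, B i) * Q * Polynomial.expand ℂ r P) := by
  have hr0 : r ≠ 0 := by omega
  obtain ⟨P, Q, hQ, hPQ⟩ := hrat
  simp only [seriesSum_comp_eq_mahlerSum hr0] at hPQ
  refine ⟨P, Q, hQ, expand_mul_mul_eq_of_mul_eq hr0
    (sum_C_mul_eq_add_of_forall hr0 u fun i hi => mahlerSum_eq_add hr a ?_) ?_ hPQ⟩
  · simp [hA i hi]
  · rw [← coe_prod_mul_sum_mul_inv s _ B hB]
    simp only [Polynomial.coe_mul, Polynomial.coe_C, mul_assoc]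

namespace Polynomial

section RootMultiplicity

variable {R : Type*} [CommRing R] [IsDomain R]

theorem rootMultiplicity_neg (p : R[X]) (ζ : R) :
    (-p).rootMultiplicity ζ = p.rootMultiplicity ζ := by
  classical rw [← count_roots, roots_neg, count_roots]

theorem rootMultiplicity_C_mul {c : R} (hc : c ≠ 0) (p : R[X]) (ζ : R) :
    (C c * p).rootMultiplicity ζ = p.rootMultiplicity ζ := by
  classical rw [← count_roots, roots_C_mul p hc, count_roots]

theorem rootMultiplicity_le_of_add_add_eq_zero {p₁ q₁ p₂ q₂ p₃ q₃ : R[X]}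
    (h : q₂ * q₃ * p₁ + q₁ * q₃ * p₂ + q₁ * q₂ * p₃ = 0) (h₁ : q₂ * q₃ * p₁ ≠ 0) {ζ : R}
    (h₂ : q₂.rootMultiplicity ζ ≤ p₂.rootMultiplicity ζ)
    (h₃ : q₃.rootMultiplicity ζ ≤ p₃.rootMultiplicity ζ) :
    q₁.rootMultiplicity ζ ≤ p₁.rootMultiplicity ζ := by
  have hd : ∀ f : R[X], (X - C ζ) ^ f.rootMultiplicity ζ ∣ f := (pow_rootMultiplicity_dvd · ζ)
  have hle : ∀ {f g : R[X]}, f.rootMultiplicity ζ ≤ g.rootMultiplicity ζ →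
      (X - C ζ) ^ f.rootMultiplicity ζ ∣ g := fun hfg => (pow_dvd_pow _ hfg).trans (hd _)
  set M := q₁.rootMultiplicity ζ + q₂.rootMultiplicity ζ + q₃.rootMultiplicity ζ
  have d₂ : (X - C ζ) ^ M ∣ q₁ * q₃ * p₂ := by
    rw [show M = q₁.rootMultiplicity ζ + q₃.rootMultiplicity ζ + q₂.rootMultiplicity ζ by omega,
      pow_add, pow_add]
    exact mul_dvd_mul (mul_dvd_mul (hd q₁) (hd q₃)) (hle h₂)
  have d₃ : (X - C ζ) ^ M ∣ q₁ * q₂ * p₃ := by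
    rw [pow_add, pow_add]
    exact mul_dvd_mul (mul_dvd_mul (hd q₁) (hd q₂)) (hle h₃)
  have d₁ : (X - C ζ) ^ M ∣ q₂ * q₃ * p₁ := by
    rw [show q₂ * q₃ * p₁ = -(q₁ * q₃ * p₂ + q₁ * q₂ * p₃) by linear_combination h]
    exact (dvd_add d₂ d₃).neg_right
  rw [← le_rootMultiplicity_iff h₁, rootMultiplicity_mul h₁,
    rootMultiplicity_mul (left_ne_zero_of_mul h₁)] at d₁
  omega

variable [DecidableEq R]

def poles (p q : R[X]) : Finset R :=
  {ζ ∈ q.roots.toFinset | p.rootMultiplicity ζ < q.rootMultiplicity ζ}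

theorem mem_poles {p q : R[X]} (hq : q ≠ 0) {ζ : R} :
    ζ ∈ poles p q ↔ p.rootMultiplicity ζ < q.rootMultiplicity ζ := by
  simp only [poles, Finset.mem_filter, Multiset.mem_toFinset, mem_roots hq, and_iff_right_iff_imp]
  exact fun h => (rootMultiplicity_pos hq).mp (by omega)

end RootMultiplicity

theorem eval_ne_zero_of_isCoprime_of_isRoot {R : Type*} [CommRing R] [Nontrivial R] {p q : R[X]}
    (h : IsCoprime p q) {ζ : R} (hq : q.IsRoot ζ) : p.eval ζ ≠ 0 := by
  simpa [hq.eq_zero] using aeval_ne_zero_of_isCoprime h ζ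

variable {K : Type*} [Field K]

theorem rootMultiplicity_expand_of_ne_zero {r : ℕ} (hr : (r : K) ≠ 0) {ζ : K} (hζ : ζ ≠ 0)
    (f : K[X]) : (expand K r f).rootMultiplicity ζ = f.rootMultiplicity (ζ ^ r) := by
  classical
  obtain rfl | hf := eq_or_ne f 0
  · simp
  have hr0 : 0 < r := Nat.pos_of_ne_zero (by rintro rfl; simp at hr)
  obtain ⟨g, hfg, hg⟩ := f.exists_eq_pow_rootMultiplicity_mul_and_not_dvd hf (ζ ^ r)
  have hgζ : ¬ (expand K r g).IsRoot ζ := by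
    rwa [IsRoot, expand_eval, ← IsRoot, ← dvd_iff_isRoot]
  have hsep : (X ^ r - C (ζ ^ r)).Separable := separable_X_pow_sub_C _ hr (pow_ne_zero _ hζ)
  have hroot : ζ ∈ (X ^ r - C (ζ ^ r)).roots := by
    rw [mem_roots (X_pow_sub_C_ne_zero hr0 _)]
    simp
  have hne : expand K r f ≠ 0 := (expand_ne_zero hr0).mpr hf
  conv_lhs => rw [hfg]
  rw [hfg, map_mul, map_pow, map_sub, expand_X, expand_C] at hne
  rw [map_mul, map_pow, map_sub, expand_X, expand_C, rootMultiplicity_mul hne,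
    rootMultiplicity_eq_zero hgζ, add_zero, ← count_roots, roots_pow, Multiset.count_nsmul,
    Multiset.count_eq_one_of_mem (nodup_roots hsep) hroot, mul_one]

variable {ι : Type*} [DecidableEq ι] {s : Finset ι} {p q : ι → K[X]} {ζ : K}

theorem eval_sum_mul_prod_erase_ne_zero {j : ι} (hj : j ∈ s) (hqj : (q j).IsRoot ζ)
    (hpj : (p j).eval ζ ≠ 0) (hq : ∀ i ∈ s, i ≠ j → ¬ (q i).IsRoot ζ) :
    (∑ i ∈ s, p i * ∏ l ∈ s.erase i, q l).eval ζ ≠ 0 := by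
  rw [eval_finsetSum, Finset.sum_eq_single_of_mem j hj]
  · rw [eval_mul, eval_prod]
    exact mul_ne_zero hpj (Finset.prod_ne_zero_iff.mpr fun i hi =>
      hq i (Finset.mem_of_mem_erase hi) (Finset.ne_of_mem_erase hi))
  · intro i _ hij
    rw [eval_mul, eval_prod,
      Finset.prod_eq_zero (f := fun l => (q l).eval ζ) (Finset.mem_erase.mpr ⟨hij.symm, hj⟩) hqj,
      mul_zero]

variable [DecidableEq K]

theorem mem_poles_of_eval_ne_zero {p q : K[X]} (hq : q ≠ 0) (hqζ : q.IsRoot ζ)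
    (hpζ : p.eval ζ ≠ 0) : ζ ∈ poles p q := by
  rw [mem_poles hq, rootMultiplicity_eq_zero hpζ]
  exact (rootMultiplicity_pos hq).mpr hqζ

theorem exists_isRoot_of_mem_poles (hN : ∑ i ∈ s, p i * ∏ l ∈ s.erase i, q l ≠ 0)
    (h : ζ ∈ poles (∑ i ∈ s, p i * ∏ l ∈ s.erase i, q l) (∏ i ∈ s, q i)) :
    ∃ i ∈ s, (q i).IsRoot ζ ∧ p i ≠ 0 := by
  by_contra! hc
  have hD : ∏ i ∈ s, q i ≠ 0 := by
    rintro hD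
    simp [poles, hD] at h
  rw [mem_poles hD] at h
  refine (not_le.mpr h) ((le_rootMultiplicity_iff hN).mpr (Finset.dvd_sum fun i hi => ?_))
  by_cases hqi : (q i).IsRoot ζ
  · simp [hc i hi hqi]
  · have hdvd : (X - C ζ) ^ rootMultiplicity ζ (∏ i ∈ s, q i) ∣ q i * ∏ l ∈ s.erase i, q l := by
      rw [Finset.mul_prod_erase s q hi]
      exact pow_rootMultiplicity_dvd _ _
    exact ((prime_X_sub_C ζ).pow_dvd_of_dvd_mul_left _ (by rwa [dvd_iff_isRoot]) hdvd).mul_left _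

end Polynomial

/-- For a rational solution `F` of `F(z) = R(z) + a F(z^r)`, with `S` the poles of `F` and `Z`
those of `R`: of `F` at `ζ`, `R` at `ζ` and `F` at `ζ ^ r`, never exactly one has a pole. -/
structure PolePropagation {K : Type*} [Field K] (r : ℕ) (S Z : Finset K) : Prop where
  mem_or_pow_mem_of_mem_right : ∀ ζ ∈ Z, ζ ≠ 0 → ζ ∈ S ∨ ζ ^ r ∈ S
  mem_or_mem_right_of_pow_mem : ∀ ζ, ζ ≠ 0 → ζ ^ r ∈ S → ζ ∈ S ∨ ζ ∈ Z
  mem_right_or_pow_mem_of_mem : ∀ ζ ∈ S, ζ ≠ 0 → ζ ∈ Z ∨ ζ ^ r ∈ S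

open Polynomial in
theorem polePropagation_poles_of_expand_mul_mul_eq {K : Type*} [Field K] [DecidableEq K] {r : ℕ}
    (hr : (r : K) ≠ 0) {a : K} (ha : a ≠ 0) {P Q N D : K[X]} (hP : P ≠ 0) (hQ : Q ≠ 0) (hN : N ≠ 0)
    (hD : D ≠ 0)
    (h : expand K r Q * D * P = expand K r Q * Q * N + C a * (D * Q * expand K r P)) :
    PolePropagation r (poles P Q) (poles N D) := by
  have hr0 : 0 < r := Nat.pos_of_ne_zero (by rintro rfl; simp at hr)
  set Q' := expand K r Q
  set P' := C (-a) * expand K r P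
  have hQ' : Q' ≠ 0 := (expand_ne_zero hr0).mpr hQ
  have hP' : P' ≠ 0 :=
    mul_ne_zero (C_ne_zero.mpr (neg_ne_zero.mpr ha)) ((expand_ne_zero hr0).mpr hP)
  -- `P / Q`, `-N / D` and `-a P(z^r) / Q(z^r)` sum to zero
  have h0 : D * Q' * P + Q * Q' * -N + Q * D * P' = 0 := by
    simp only [P', map_neg]
    linear_combination h
  have hmult : ∀ ζ ≠ 0, Q'.rootMultiplicity ζ = Q.rootMultiplicity (ζ ^ r) ∧
      P'.rootMultiplicity ζ = P.rootMultiplicity (ζ ^ r) := fun ζ hζ =>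
    ⟨rootMultiplicity_expand_of_ne_zero hr hζ Q, by
      rw [rootMultiplicity_C_mul (neg_ne_zero.mpr ha), rootMultiplicity_expand_of_ne_zero hr hζ]⟩
  have mN := rootMultiplicity_neg N
  refine ⟨fun ζ hND hζ => ?_, fun ζ hζ hPQr => ?_, fun ζ hPQ hζ => ?_⟩ <;>
    simp only [mem_poles hQ, mem_poles hD] at * <;> by_contra! hc <;> have hm := hmult ζ hζ
  · have := rootMultiplicity_le_of_add_add_eq_zero (p₁ := -N) (q₁ := D) (p₂ := P) (q₂ := Q)
      (p₃ := P') (q₃ := Q') (ζ := ζ) (by linear_combination h0) (by simp [hQ, hQ', hN]) hc.1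
      (by rw [hm.1, hm.2]; exact hc.2)
    rw [mN] at this
    omega
  · have := rootMultiplicity_le_of_add_add_eq_zero (p₁ := P') (q₁ := Q') (p₂ := P) (q₂ := Q)
      (p₃ := -N) (q₃ := D) (ζ := ζ) (by linear_combination h0) (by simp [hQ, hD, hP']) hc.1
      (by rw [mN]; exact hc.2)
    rw [hm.1, hm.2] at this
    omega
  · have := rootMultiplicity_le_of_add_add_eq_zero (p₁ := P) (q₁ := Q) (p₂ := -N) (q₂ := D)
      (p₃ := P') (q₃ := Q') (ζ := ζ) h0 (by simp [hD, hQ', hP]) (by rw [mN]; exact hc.1)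
      (by rw [hm.1, hm.2]; exact hc.2)
    omega

theorem Complex.card_nthRootsFinset {n : ℕ} (hn : n ≠ 0) {z : ℂ} (hz : z ≠ 0) :
    #(Polynomial.nthRootsFinset n z) = n := by
  classical
  have hprim := Complex.isPrimitiveRoot_exp n hn
  rw [Polynomial.nthRootsFinset_def, Multiset.toFinset_card_of_nodup (hprim.nthRoots_nodup hz),
    hprim.card_nthRoots, if_pos (IsAlgClosed.exists_pow_nat_eq z (Nat.pos_of_ne_zero hn))]

section PoleChains

variable {S Z : Finset ℂ} {r : ℕ}

theorem pow_pow_injective {x : ℝ} (hx₀ : 0 < x) (hx₁ : x ≠ 1) (hr : 2 ≤ r) :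
    Function.Injective fun n : ℕ => x ^ r ^ n :=
  (pow_right_injective₀ hx₀ hx₁).comp (Nat.pow_right_injective hr)

theorem card_biUnion_nthRootsFinset {T : Finset ℂ} (hT : 0 ∉ T) (hr : r ≠ 0) :
    #(T.biUnion fun ζ => Polynomial.nthRootsFinset r ζ) = r * #T := by
  rw [card_biUnion, mul_comm,
    sum_const_nat fun ζ hζ => Complex.card_nthRootsFinset hr (ne_of_mem_of_not_mem hζ hT)]
  intro ζ _ ζ' _ hne
  refine disjoint_left.mpr fun η h h' => hne ?_
  rw [Polynomial.mem_nthRootsFinset (Nat.pos_of_ne_zero hr)] at h h'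
  exact h.symm.trans h'

theorem Finset.exists_forall_norm_pow_pow_ne (S : Finset ℂ) (hr : 2 ≤ r) {ω : ℝ} (hω₀ : ω ≠ 0)
    (hω₁ : ω ≠ 1) : ∃ h, ∀ ζ ∈ S, ‖ζ‖ ^ r ^ h ≠ ω := by
  by_contra! hS
  choose f hfS hfω using hS
  have hinj : Function.Injective f := by
    intro h h' hff
    have hf₀ : 0 < ‖f h‖ := (norm_nonneg _).lt_of_ne fun h0 =>
      hω₀ (by rw [← hfω h, ← h0, zero_pow (pow_ne_zero _ (by omega))])
    have hf₁ : ‖f h‖ ≠ 1 := fun h1 => hω₁ (by rw [← hfω h, h1, one_pow])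
    exact pow_pow_injective hf₀ hf₁ hr ((hfω h).trans (by rw [hff]; exact (hfω h').symm))
  exact Set.infinite_of_injective_forall_mem hinj hfS S.finite_toSet

theorem PolePropagation.exists_pow_pow_mem_right (hSZ : PolePropagation r S Z) (hr : 2 ≤ r)
    {ζ : ℂ} (hζS : ζ ∈ S) (hζ : ζ ≠ 0) (hζ₁ : ‖ζ‖ ≠ 1) : ∃ n, ζ ^ r ^ n ∈ Z := by
  by_contra! hZ
  have hmem : ∀ n, ζ ^ r ^ n ∈ S := by
    intro n
    induction n with
    | zero => simpa using hζS
    | succ n ih =>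
      rw [pow_succ, pow_mul]
      exact (hSZ.mem_right_or_pow_mem_of_mem _ ih (pow_ne_zero _ hζ)).resolve_left (hZ n)
  have hinj : Function.Injective fun n => ζ ^ r ^ n := fun n n' h =>
    pow_pow_injective (norm_pos_iff.mpr hζ) hζ₁ hr (by simpa using congrArg norm h)
  exact Set.infinite_of_injective_forall_mem hinj hmem S.finite_toSet

theorem PolePropagation.mul_card_le (hSZ : PolePropagation r S Z) (hr : r ≠ 0) {ω : ℝ}
    (hω : ω ≠ 0) {n : ℕ} (hn : n ≠ 0) :
    r * #{ζ ∈ S | ‖ζ‖ ^ n = ω} ≤ #{ζ ∈ S | ‖ζ‖ ^ (r * n) = ω} + #{ζ ∈ Z | ‖ζ‖ ^ (r * n) = ω} := by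
  have h0 : 0 ∉ {ζ ∈ S | ‖ζ‖ ^ n = ω} := by simp [zero_pow hn, Ne.symm hω]
  rw [← card_biUnion_nthRootsFinset h0 hr]
  refine (card_le_card fun η hη => ?_).trans (card_union_le _ _)
  obtain ⟨ζ, hζ, hηζ⟩ := mem_biUnion.mp hη
  rw [Polynomial.mem_nthRootsFinset (Nat.pos_of_ne_zero hr)] at hηζ
  obtain ⟨hζS, hζω⟩ := mem_filter.mp hζ
  have hnorm : ‖η‖ ^ (r * n) = ω := by rw [pow_mul, ← norm_pow, hηζ, hζω]
  have hη : η ≠ 0 := by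
    rintro rfl
    exact hω (by rw [← hnorm, norm_zero, zero_pow (mul_ne_zero hr hn)])
  rcases hSZ.mem_or_mem_right_of_pow_mem η hη (hηζ ▸ hζS) with hηS | hηZ
  · exact mem_union_left _ (mem_filter.mpr ⟨hηS, hnorm⟩)
  · exact mem_union_right _ (mem_filter.mpr ⟨hηZ, hnorm⟩)

theorem PolePropagation.exists_lt_card_filter_norm_pow_eq (hSZ : PolePropagation r S Z)
    (hr : 2 ≤ r) {ω : ℝ} (hω₀ : ω ≠ 0) (hω₁ : ω ≠ 1) (hne : {ζ ∈ S | ‖ζ‖ = ω}.Nonempty) :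
    ∃ h, (r - 1) * #{ζ ∈ S | ‖ζ‖ = ω} < #{ζ ∈ Z | ‖ζ‖ ^ r ^ (h + 1) = ω} := by
  set c := #{ζ ∈ S | ‖ζ‖ = ω}
  by_contra! hZ
  have hgrow : ∀ h, c ≤ #{ζ ∈ S | ‖ζ‖ ^ r ^ h = ω} := by
    intro h
    induction h with
    | zero => simp [c]
    | succ h ih =>
      have hstep := hSZ.mul_card_le (by omega) hω₀ (pow_ne_zero h (by omega : r ≠ 0))
      rw [← pow_succ'] at hstep
      have := Nat.mul_le_mul_left r ih
      have : (r - 1) * c + c = r * c := by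
        rw [← Nat.succ_mul, Nat.succ_eq_add_one, Nat.sub_add_cancel (by omega)]
      have := hZ h
      omega
  obtain ⟨h, hh⟩ := S.exists_forall_norm_pow_pow_ne hr hω₀ hω₁
  obtain ⟨ζ, hζ⟩ := card_pos.mp ((card_pos.mpr hne).trans_le (hgrow h))
  exact hh ζ (mem_filter.mp hζ).1 (mem_filter.mp hζ).2

theorem PolePropagation.mem_of_mem_right_of_norm_eq (hSZ : PolePropagation r S Z) (hr : 2 ≤ r)
    {ω : ℝ} (hω₀ : 0 < ω) (hω₁ : ω ≠ 1) (hZ : ∀ ζ ∈ Z, ∀ k, 0 < k → ‖ζ‖ ≠ ω ^ r ^ k) {ζ : ℂ}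
    (hζZ : ζ ∈ Z) (hζ : ‖ζ‖ = ω) : ζ ∈ S := by
  have hζ0 : ζ ≠ 0 := norm_pos_iff.mp (hζ ▸ hω₀)
  refine (hSZ.mem_or_pow_mem_of_mem_right ζ hζZ hζ0).resolve_right fun hζr => ?_
  obtain ⟨n, hn⟩ := hSZ.exists_pow_pow_mem_right hr hζr (pow_ne_zero _ hζ0) (by
    rw [norm_pow, hζ]
    exact fun h => hω₁ ((pow_eq_one_iff_of_nonneg hω₀.le (by omega)).mp h))
  exact hZ _ hn (n + 1) n.succ_pos (by rw [← pow_mul, ← pow_succ', norm_pow, hζ])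

theorem PolePropagation.exists_lt_card (hSZ : PolePropagation r S Z) (hr : 2 ≤ r) {ω : ℝ}
    (hω₀ : 0 < ω) (hω₁ : ω ≠ 1) (hZ : ∀ ζ ∈ Z, ∀ k, 0 < k → ‖ζ‖ ≠ ω ^ r ^ k) {T : Finset ℂ}
    (hTZ : T ⊆ Z) (hTω : ∀ ζ ∈ T, ‖ζ‖ = ω) (hT : T.Nonempty) :
    ∃ h, (r - 1) * #T < #{ζ ∈ Z | ‖ζ‖ ^ r ^ (h + 1) = ω} := by
  have hTS : T ⊆ {ζ ∈ S | ‖ζ‖ = ω} := fun ζ hζ => mem_filter.mpr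
    ⟨hSZ.mem_of_mem_right_of_norm_eq hr hω₀ hω₁ hZ (hTZ hζ) (hTω ζ hζ), hTω ζ hζ⟩
  obtain ⟨h, hh⟩ := hSZ.exists_lt_card_filter_norm_pow_eq hr hω₀.ne' hω₁ (hT.mono hTS)
  exact ⟨h, (Nat.mul_le_mul_left _ (card_le_card hTS)).trans_lt hh⟩

end PoleChains

theorem exists_forall_ne_pow_pow {ι : Type*} {s : Finset ι} (hs : s.Nonempty) {ω : ι → ℝ}
    (hω : ∀ i ∈ s, 0 < ω i ∧ ω i ≠ 1) {r : ℕ} (hr : 2 ≤ r) :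
    ∃ i ∈ s, ∀ j ∈ s, ∀ k, 0 < k → ω j ≠ ω i ^ r ^ k := by
  obtain ⟨i, hi, hmax⟩ := s.exists_max_image (fun i => |Real.log (ω i)|) hs
  refine ⟨i, hi, fun j hj k hk hji => ?_⟩
  have hlog : 0 < |Real.log (ω i)| :=
    abs_pos.mpr (Real.log_ne_zero_of_pos_of_ne_one (hω i hi).1 (hω i hi).2)
  have hrk : (2 : ℝ) ≤ (r ^ k : ℕ) := by exact_mod_cast hr.trans (Nat.le_self_pow hk.ne' r)
  have := hmax j hj
  rw [hji, Real.log_pow, abs_mul, Nat.abs_cast] at this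
  nlinarith

theorem card_filter_biUnion_norm_pow_eq_le {ι : Type*} [DecidableEq ι] {J : Finset ι}
    {R : ι → Finset ℂ} {ω : ι → ℝ} (hR : ∀ j ∈ J, ∀ ζ ∈ R j, ‖ζ‖ = ω j) (hinj : Set.InjOn ω J)
    {n : ℕ} (hn : n ≠ 0) {x : ℝ} {b : ℕ} (hb : ∀ j ∈ J, ω j ^ n = x → #(R j) ≤ b) :
    #{ζ ∈ J.biUnion R | ‖ζ‖ ^ n = x} ≤ b := by
  obtain he | ⟨ζ₀, hζ₀⟩ := eq_empty_or_nonempty {ζ ∈ J.biUnion R | ‖ζ‖ ^ n = x}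
  · simp [he]
  obtain ⟨hζ₀J, hζ₀x⟩ := mem_filter.mp hζ₀
  obtain ⟨j₀, hj₀, hζ₀j₀⟩ := mem_biUnion.mp hζ₀J
  rw [hR j₀ hj₀ ζ₀ hζ₀j₀] at hζ₀x
  refine (card_le_card fun ζ hζ => ?_).trans (hb j₀ hj₀ hζ₀x)
  obtain ⟨hζJ, hζx⟩ := mem_filter.mp hζ
  obtain ⟨j, hj, hζj⟩ := mem_biUnion.mp hζJ
  rw [hR j hj ζ hζj] at hζx
  have hωj : ω j = ω j₀ := (pow_left_inj₀ (hR j hj ζ hζj ▸ norm_nonneg ζ)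
    (hR j₀ hj₀ ζ₀ hζ₀j₀ ▸ norm_nonneg ζ₀) hn).mp (hζx.trans hζ₀x.symm)
  rwa [← hinj hj hj₀ hωj]

theorem PolePropagation.eq_zero {r m : ℕ} (hr : 2 ≤ r) {R : ℕ → Finset ℂ} {t : ℕ → ℕ}
    {ω : ℕ → ℝ} {u : ℕ → ℂ} {S : Finset ℂ}
    (hSZ : PolePropagation r S ({j ∈ Icc 1 m | u j ≠ 0}.biUnion R))
    (hR : ∀ j, 1 ≤ j → j ≤ m → (R j).Nonempty)
    (hRω : ∀ j, 1 ≤ j → j ≤ m → ∀ ζ ∈ R j, ‖ζ‖ = ω j)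
    (hω₀ : ∀ j, 1 ≤ j → j ≤ m → 0 < ω j) (ht : ∀ j, 1 ≤ j → j ≤ m → #(R j) = t j)
    (hωdist : ∀ i j, 1 ≤ i → i ≤ m → 1 ≤ j → j ≤ m → i ≠ j → ω i ≠ ω j) (hωm : ω m = 1)
    (hrt : ∀ i j, 1 ≤ i → i < m → 1 ≤ j → j < m → t j ≤ (r - 1) * t i) :
    ∀ i, 1 ≤ i → i < m → u i = 0 := by
  by_contra! hu
  obtain ⟨i₁, hi₁, hi₁m, hu₁⟩ := hu
  set J := {j ∈ Icc 1 m | u j ≠ 0}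
  have hJ : ∀ j ∈ J, 1 ≤ j ∧ j ≤ m := fun j hj => (mem_Icc.mp (mem_filter.mp hj).1)
  have hlt : ∀ j, 1 ≤ j → j ≤ m → ω j ≠ 1 → j < m := fun j _ hj hj₁ =>
    lt_of_le_of_ne hj fun h => hj₁ (h ▸ hωm)
  obtain ⟨i₀, hi₀, hmax⟩ := exists_forall_ne_pow_pow (s := {j ∈ Ico 1 m | u j ≠ 0}) (ω := ω)
    ⟨i₁, by simp [hi₁, hi₁m, hu₁]⟩ (fun j hj => by
      simp only [mem_filter, mem_Ico] at hj
      exact ⟨hω₀ j hj.1.1 hj.1.2.le, fun h => hωdist j m hj.1.1 hj.1.2.le (by omega) le_rfl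
        hj.1.2.ne (h.trans hωm.symm)⟩) hr
  simp only [mem_filter, mem_Ico] at hi₀
  obtain ⟨⟨h₁, h₂⟩, hu₀⟩ := hi₀
  have hω₁ : ω i₀ ≠ 1 := fun h => hωdist i₀ m h₁ h₂.le (by omega) le_rfl h₂.ne (h.trans hωm.symm)
  have hdown : ∀ ζ ∈ J.biUnion R, ∀ k, 0 < k → ‖ζ‖ ≠ ω i₀ ^ r ^ k := by
    intro ζ hζ k hk hζk
    obtain ⟨j, hj, hζj⟩ := mem_biUnion.mp hζ
    rw [hRω j (hJ j hj).1 (hJ j hj).2 ζ hζj] at hζk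
    have hj₁ : ω j ≠ 1 := hζk ▸ fun h => hω₁
      ((pow_eq_one_iff_of_nonneg (hω₀ i₀ h₁ h₂.le).le (by positivity)).mp h)
    exact hmax j (by simp [(hJ j hj).1, hlt j (hJ j hj).1 (hJ j hj).2 hj₁, (mem_filter.mp hj).2])
      k hk hζk
  obtain ⟨h, hlevel⟩ := hSZ.exists_lt_card hr (hω₀ i₀ h₁ h₂.le) hω₁ hdown
    (fun ζ hζ => mem_biUnion.mpr ⟨i₀, by simp [J, h₁, h₂.le, hu₀], hζ⟩) (hRω i₀ h₁ h₂.le)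
    (hR i₀ h₁ h₂.le)
  have hZlevel : #{ζ ∈ J.biUnion R | ‖ζ‖ ^ r ^ (h + 1) = ω i₀} ≤ (r - 1) * t i₀ := by
    refine card_filter_biUnion_norm_pow_eq_le (ω := ω) (fun j hj => hRω j (hJ j hj).1 (hJ j hj).2)
      (fun j hj j' hj' hjj' => by_contra fun hne => hωdist j j' (hJ j hj).1 (hJ j hj).2
        (hJ j' hj').1 (hJ j' hj').2 hne hjj') (pow_ne_zero _ (by omega)) fun j hj hjω => ?_
    have hj₁ : ω j ≠ 1 := fun h1 => hω₁ (by rw [← hjω, h1, one_pow])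
    exact ht j (hJ j hj).1 (hJ j hj).2 ▸
      hrt i₀ j h₁ h₂ (hJ j hj).1 (hlt j (hJ j hj).1 (hJ j hj).2 hj₁)
  rw [ht i₀ h₁ h₂.le] at hlevel
  omega

open Polynomial in
theorem exists_polePropagation_of_isRationalPS {r m : ℕ} (hr : 2 ≤ r) {a : ℂ} (ha : a ≠ 0)
    {A B : ℕ → ℂ[X]} {u : ℕ → ℂ} (hA0 : ∀ i ≤ m, (A i).coeff 0 = 0) (hB0 : B 0 = 1)
    (hB : ∀ i ≤ m, (B i).coeff 0 ≠ 0)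
    (hAB : ∀ j, 1 ≤ j → j ≤ m → ∀ ζ, (B j).IsRoot ζ → (A j).eval ζ ≠ 0)
    (hdisj : ∀ j, 1 ≤ j → j ≤ m → ∀ ζ, (B j).IsRoot ζ → ∀ l ≤ m, l ≠ j → ¬ (B l).IsRoot ζ)
    (hJ : ∃ j, 1 ≤ j ∧ j ≤ m ∧ u j ≠ 0 ∧ ∃ ζ, (B j).IsRoot ζ)
    (hrat : IsRationalPS (∑ i ∈ range (m + 1), PowerSeries.C (u i) * seriesSum fun h =>
      PowerSeries.C (a ^ h) * ((A i).comp (Polynomial.X ^ r ^ h) : PowerSeries ℂ) *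
        ((B i).comp (Polynomial.X ^ r ^ h) : PowerSeries ℂ)⁻¹)) :
    ∃ S, PolePropagation r S ({j ∈ Icc 1 m | u j ≠ 0}.biUnion fun j => (B j).roots.toFinset) := by
  have hrange : ∀ {i}, i ∈ range (m + 1) ↔ i ≤ m := by simp
  obtain ⟨P, Q, hQ, hrel⟩ := exists_expand_mul_mul_eq_of_isRationalPS hr a u
    (fun i hi => hA0 i (hrange.mp hi)) (fun i hi => hB i (hrange.mp hi)) hrat
  set N := ∑ i ∈ range (m + 1), C (u i) * A i * ∏ j ∈ (range (m + 1)).erase i, B j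
  set D := ∏ i ∈ range (m + 1), B i
  have hD : D ≠ 0 := prod_ne_zero_iff.mpr fun i hi h0 => hB i (hrange.mp hi) (by simp [h0])
  have hNeval : ∀ j, 1 ≤ j → j ≤ m → u j ≠ 0 → ∀ ζ, (B j).IsRoot ζ → N.eval ζ ≠ 0 :=
    fun j h₁ h₂ huj ζ hζ => eval_sum_mul_prod_erase_ne_zero (hrange.mpr h₂) hζ
      (by simpa [huj] using hAB j h₁ h₂ ζ hζ) fun l hl hlj =>
        hdisj j h₁ h₂ ζ hζ l (hrange.mp hl) hlj
  obtain ⟨j, h₁, h₂, huj, ζ, hζ⟩ := hJ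
  have hN : N ≠ 0 := fun h => hNeval j h₁ h₂ huj ζ hζ (by rw [h, eval_zero])
  have hP : P ≠ 0 := by
    rintro rfl
    simp [hQ, hN, expand_eq_zero (by omega : 0 < r)] at hrel
  refine ⟨poles P Q, ?_⟩
  convert polePropagation_poles_of_expand_mul_mul_eq (by exact_mod_cast (by omega : r ≠ 0)) ha hP hQ
    hN hD hrel
  ext ζ
  simp only [mem_biUnion, mem_filter, mem_Icc, Multiset.mem_toFinset]
  constructor
  · rintro ⟨j, ⟨⟨h₁, h₂⟩, huj⟩, hζ⟩
    have hζ := (mem_roots'.mp hζ).2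
    refine mem_poles_of_eval_ne_zero hD ?_ (hNeval j h₁ h₂ huj ζ hζ)
    rw [IsRoot, eval_prod]
    exact prod_eq_zero (hrange.mpr h₂) hζ
  · intro hζ
    obtain ⟨i, hi, hζ, hi0⟩ := exists_isRoot_of_mem_poles hN hζ
    have hi₁ : 1 ≤ i := Nat.one_le_iff_ne_zero.mpr fun h => by simp [h, hB0] at hζ
    refine ⟨i, ⟨⟨hi₁, hrange.mp hi⟩, fun hu => by simp [hu] at hi0⟩, ?_⟩
    exact mem_roots'.mpr ⟨fun h => hB i (hrange.mp hi) (by simp [h]), hζ⟩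

theorem sum_range_succ_eq_add_of_forall_eq_zero {M : Type*} [AddCommMonoid M] {m : ℕ} (hm : 1 ≤ m)
    {f : ℕ → M} (hf : ∀ i, 1 ≤ i → i < m → f i = 0) : ∑ i ∈ range (m + 1), f i = f 0 + f m :=
  sum_eq_add_of_mem 0 m (by simp) (by simp) (by omega) fun i hi hi' => hf i (by omega)
    (by simp only [mem_range] at hi; omega)

open Polynomial in
theorem eq_zero_of_isRationalPS (r : ℕ) (hr : 2 ≤ r) (a : ℂ) (ha : a ≠ 0) (m : ℕ)
    (A B : ℕ → ℂ[X]) (t : ℕ → ℕ) (ω : ℕ → ℝ) (hA0 : ∀ i ≤ m, (A i).coeff 0 = 0) (hB0 : B 0 = 1)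
    (hcop : ∀ i, 1 ≤ i → i ≤ m → IsCoprime (A i) (B i))
    (hnconst : ∀ i, 1 ≤ i → i ≤ m → 0 < (B i).natDegree)
    (ht : ∀ i, 1 ≤ i → i ≤ m → ((B i).roots.toFinset.card = t i))
    (hω : ∀ i, 1 ≤ i → i ≤ m → ∀ z ∈ (B i).roots, ‖z‖ = ω i)
    (hωdist : ∀ i j, 1 ≤ i → i ≤ m → 1 ≤ j → j ≤ m → i ≠ j → ω i ≠ ω j) (hωm : ω m = 1)
    (hrt : ∀ i j, 1 ≤ i → i < m → 1 ≤ j → j < m → t j ≤ (r - 1) * t i) (u : ℕ → ℂ)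
    (hrat : IsRationalPS (∑ i ∈ range (m + 1), PowerSeries.C (u i) * seriesSum fun h =>
      PowerSeries.C (a ^ h) * ((A i).comp (Polynomial.X ^ r ^ h) : PowerSeries ℂ) *
        ((B i).comp (Polynomial.X ^ r ^ h) : PowerSeries ℂ)⁻¹)) :
    ∀ i, 1 ≤ i → i < m → u i = 0 := by
  intro i hi him
  by_contra hu
  have hBne : ∀ j, 1 ≤ j → j ≤ m → B j ≠ 0 := fun j h₁ h₂ =>
    ne_zero_of_natDegree_gt (hnconst j h₁ h₂)
  have hroot : ∀ j, 1 ≤ j → j ≤ m → ∃ ζ, (B j).IsRoot ζ := fun j h₁ h₂ =>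
    IsAlgClosed.exists_root _ (natDegree_pos_iff_degree_pos.mp (hnconst j h₁ h₂)).ne'
  have hnorm : ∀ j, 1 ≤ j → j ≤ m → ∀ ζ, (B j).IsRoot ζ → ‖ζ‖ = ω j := fun j h₁ h₂ ζ hζ =>
    hω j h₁ h₂ ζ (mem_roots'.mpr ⟨hBne j h₁ h₂, hζ⟩)
  have hB : ∀ j ≤ m, (B j).coeff 0 ≠ 0 := by
    intro j hj
    rcases Nat.eq_zero_or_pos j with rfl | hj₀
    · simp [hB0]
    · rw [coeff_zero_eq_eval_zero]
      exact eval_ne_zero_of_isCoprime_of_isRoot (hcop j hj₀ hj).symm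
        (by rw [IsRoot, ← coeff_zero_eq_eval_zero, hA0 j hj])
  have hω₀ : ∀ j, 1 ≤ j → j ≤ m → 0 < ω j := by
    intro j h₁ h₂
    obtain ⟨ζ, hζ⟩ := hroot j h₁ h₂
    refine hnorm j h₁ h₂ ζ hζ ▸ norm_pos_iff.mpr ?_
    rintro rfl
    exact hB j h₂ (by rwa [coeff_zero_eq_eval_zero])
  have hdisj : ∀ j, 1 ≤ j → j ≤ m → ∀ ζ, (B j).IsRoot ζ → ∀ l ≤ m, l ≠ j → ¬ (B l).IsRoot ζ := by
    intro j h₁ h₂ ζ hζ l hl hlj hlζ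
    rcases Nat.eq_zero_or_pos l with rfl | hl₀
    · simp [hB0] at hlζ
    · exact hωdist l j hl₀ hl h₁ h₂ hlj ((hnorm l hl₀ hl ζ hlζ).symm.trans (hnorm j h₁ h₂ ζ hζ))
  obtain ⟨S, hSZ⟩ := exists_polePropagation_of_isRationalPS hr ha hA0 hB0 hB
    (fun j h₁ h₂ ζ => eval_ne_zero_of_isCoprime_of_isRoot (hcop j h₁ h₂)) hdisj
    ⟨i, hi, him.le, hu, hroot i hi him.le⟩ hrat
  refine hu (hSZ.eq_zero hr (fun j h₁ h₂ => ?_) (fun j h₁ h₂ ζ hζ => ?_) hω₀ ht hωdist hωm hrt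
    i hi him)
  · obtain ⟨ζ, hζ⟩ := hroot j h₁ h₂
    exact ⟨ζ, Multiset.mem_toFinset.mpr (mem_roots'.mpr ⟨hBne j h₁ h₂, hζ⟩)⟩
  · exact hω j h₁ h₂ ζ (Multiset.mem_toFinset.mp hζ)

theorem lemma1_rationality_general
    (r : ℕ) (hr : 2 ≤ r) (a : ℂ) (ha : a ≠ 0) (m : ℕ) (hm : 1 ≤ m)
    (A B : ℕ → Polynomial ℂ) (t : ℕ → ℕ) (ω : ℕ → ℝ)
    (hA0 : ∀ i ≤ m, (A i).coeff 0 = 0)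
    (hB0 : B 0 = 1)
    (hcop : ∀ i, 1 ≤ i → i ≤ m → IsCoprime (A i) (B i))
    (hnconst : ∀ i, 1 ≤ i → i ≤ m → 0 < (B i).natDegree)
    (ht : ∀ i, 1 ≤ i → i ≤ m → ((B i).roots.toFinset.card = t i))
    (hω : ∀ i, 1 ≤ i → i ≤ m → ∀ z ∈ (B i).roots, ‖z‖ = ω i)
    (hωdist : ∀ i j, 1 ≤ i → i ≤ m → 1 ≤ j → j ≤ m → i ≠ j → ω i ≠ ω j)
    (hωm : ω m = 1)
    (hrt : ∀ i j, 1 ≤ i → i < m → 1 ≤ j → j < m → t j ≤ (r - 1) * t i)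
    (u : ℕ → ℂ) :
    IsRationalPS
      (∑ i ∈ Finset.range (m + 1),
        PowerSeries.C (u i) *
          seriesSum (fun h =>
            PowerSeries.C (a ^ h) * ((A i).comp (Polynomial.X ^ r ^ h) : PowerSeries ℂ) *
              (((B i).comp (Polynomial.X ^ r ^ h) : PowerSeries ℂ))⁻¹)) ↔
    ((∀ i, 1 ≤ i → i < m → u i = 0) ∧
      IsRationalPS
        (PowerSeries.C (u 0) *
            seriesSum (fun h =>
              PowerSeries.C (a ^ h) * ((A 0).comp (Polynomial.X ^ r ^ h) : PowerSeries ℂ) *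
                (((B 0).comp (Polynomial.X ^ r ^ h) : PowerSeries ℂ))⁻¹) +
          PowerSeries.C (u m) *
            seriesSum (fun h =>
              PowerSeries.C (a ^ h) * ((A m).comp (Polynomial.X ^ r ^ h) : PowerSeries ℂ) *
                (((B m).comp (Polynomial.X ^ r ^ h) : PowerSeries ℂ))⁻¹))) := by
  constructor
  · intro hrat
    have hu := eq_zero_of_isRationalPS r hr a ha m A B t ω hA0 hB0 hcop hnconst ht hω hωdist hωm
      hrt u hrat
    refine ⟨hu, ?_⟩
    rwa [sum_range_succ_eq_add_of_forall_eq_zero hm fun i h₁ h₂ => by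
      rw [hu i h₁ h₂, map_zero, zero_mul]] at hrat
  · rintro ⟨hu, hrat⟩
    rwa [sum_range_succ_eq_add_of_forall_eq_zero hm fun i h₁ h₂ => by
      rw [hu i h₁ h₂, map_zero, zero_mul]]

theorem lemma1_rationality
    (r : ℕ) (hr : 2 ≤ r) (a : ℂ) (ha : a ≠ 0) (m : ℕ) (hm : 1 ≤ m)
    (A B : ℕ → Polynomial ℂ) (t : ℕ → ℕ) (ω : ℕ → ℝ)
    (hA_ne : ∀ i ≤ m, A i ≠ 0) (hB_ne : ∀ i ≤ m, B i ≠ 0)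
    (hA0 : ∀ i ≤ m, (A i).coeff 0 = 0)
    (hB0 : B 0 = 1)
    (hcop : ∀ i, 1 ≤ i → i ≤ m → IsCoprime (A i) (B i))
    (hmonic : ∀ i, 1 ≤ i → i ≤ m → (B i).Monic)
    (hnconst : ∀ i, 1 ≤ i → i ≤ m → 0 < (B i).natDegree)
    (hdist : ∀ i j, 1 ≤ i → i ≤ m → 1 ≤ j → j ≤ m → i ≠ j → B i ≠ B j)
    (ht : ∀ i, 1 ≤ i → i ≤ m → ((B i).roots.toFinset.card = t i))
    (hω : ∀ i, 1 ≤ i → i ≤ m → ∀ z ∈ (B i).roots, ‖z‖ = ω i)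
    (hωdist : ∀ i j, 1 ≤ i → i ≤ m → 1 ≤ j → j ≤ m → i ≠ j → ω i ≠ ω j)
    (hωm : ω m = 1)
    (hrt : ∀ i j, 1 ≤ i → i < m → 1 ≤ j → j < m → t j ≤ (r - 1) * t i)
    (u : ℕ → ℂ) :
    IsRationalPS
      (∑ i ∈ Finset.range (m + 1),
        PowerSeries.C (u i) *
          seriesSum (fun h =>
            PowerSeries.C (a ^ h) * ((A i).comp (Polynomial.X ^ r ^ h) : PowerSeries ℂ) *
              (((B i).comp (Polynomial.X ^ r ^ h) : PowerSeries ℂ))⁻¹)) ↔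
    ((∀ i, 1 ≤ i → i < m → u i = 0) ∧
      IsRationalPS
        (PowerSeries.C (u 0) *
            seriesSum (fun h =>
              PowerSeries.C (a ^ h) * ((A 0).comp (Polynomial.X ^ r ^ h) : PowerSeries ℂ) *
                (((B 0).comp (Polynomial.X ^ r ^ h) : PowerSeries ℂ))⁻¹) +
          PowerSeries.C (u m) *
            seriesSum (fun h =>
              PowerSeries.C (a ^ h) * ((A m).comp (Polynomial.X ^ r ^ h) : PowerSeries ℂ) *
                (((B m).comp (Polynomial.X ^ r ^ h) : PowerSeries ℂ))⁻¹))) :=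
  lemma1_rationality_general r hr a ha m hm A B t ω hA0 hB0 hcop hnconst ht hω hωdist hωm hrt u
end
end

section
/- Let ζ := e^{πi/3}. For every complex number z with |z| < 1, Σ_{h=0}^∞ ( ζ^{−2}·z^{2^h}/(z^{2^{h+1}} − ζ²) + ζ²·z^{2^h}/(z^{2^{h+1}} − ζ⁴) ) = (2z² + z)/(z² + z + 1). -/
/-!
Write w = ζ², a primitive cube root of unity, and g(x) = (2x² + x)/(x² + x + 1). Since
(x² - w)(x² - w²) = x⁴ + x² + 1, partial fractions give w⁻¹x/(x² - w) + wx/(x² - w²) = g(x) - g(x²).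
For x = z^(2^h) the series therefore telescopes to g(z) - lim g(z^(2^n)) = g(z) - g(0) = g(z);
its terms are O(‖z‖^h), which gives the absolute convergence that `tsum` requires.
-/

open Complex Filter Topology

theorem Summable.hasSum_sub_succ_of_tendsto {G : Type*} [AddCommGroup G] [TopologicalSpace G]
    [IsTopologicalAddGroup G] [T2Space G] {f : ℕ → G} {l : G}
    (hs : Summable fun n ↦ f n - f (n + 1)) (hf : Tendsto f atTop (𝓝 l)) :
    HasSum (fun n ↦ f n - f (n + 1)) (f 0 - l) := by
  rw [hs.hasSum_iff_tendsto_nat]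
  simp_rw [Finset.sum_range_sub']
  exact tendsto_const_nhds.sub hf

lemma partial_fractions_cube_root {K : Type*} [Field K] {w x : K} (hw : w ^ 2 + w + 1 = 0)
    (h1 : x ^ 2 ≠ w) (h2 : x ^ 2 ≠ w ^ 2) (h3 : x ^ 2 + x + 1 ≠ 0) :
    w⁻¹ * x / (x ^ 2 - w) + w * x / (x ^ 2 - w ^ 2) =
      (2 * x ^ 2 + x) / (x ^ 2 + x + 1) - (2 * (x ^ 2) ^ 2 + x ^ 2) / ((x ^ 2) ^ 2 + x ^ 2 + 1) := by
  have hw_inv : w⁻¹ = w ^ 2 := inv_eq_of_mul_eq_one_right (by linear_combination (w - 1) * hw)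
  have hprod : (x ^ 2 - w) * (x ^ 2 - w ^ 2) = (x ^ 2) ^ 2 + x ^ 2 + 1 := by
    linear_combination (w - 1 - x ^ 2) * hw
  have h4 : (x ^ 2) ^ 2 + x ^ 2 + 1 ≠ 0 :=
    hprod ▸ mul_ne_zero (sub_ne_zero.2 h1) (sub_ne_zero.2 h2)
  rw [hw_inv, div_add_div _ _ (sub_ne_zero.2 h1) (sub_ne_zero.2 h2), hprod, div_sub_div _ _ h3 h4,
    div_eq_div_iff h4 (mul_ne_zero h3 h4)]
  linear_combination
    (x ^ 3 - x * (w ^ 2 - w + 1)) * (x ^ 2 + x + 1) * ((x ^ 2) ^ 2 + x ^ 2 + 1) * hw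

lemma IsPrimitiveRoot.sq_add_self_add_one {R : Type*} [CommRing R] [IsDomain R] {w : R}
    (hw : IsPrimitiveRoot w 3) : w ^ 2 + w + 1 = 0 := by
  linear_combination (by simpa [Finset.sum_range_succ] using hw.geom_sum_eq_zero (by norm_num) :
    1 + w + w ^ 2 = 0)

lemma norm_mul_div_sub_le {𝕜 : Type*} [NormedField 𝕜] {c u x y : 𝕜} {r : ℝ} (hc : ‖c‖ = 1)
    (hu : ‖u‖ = 1) (hy : ‖y‖ ≤ r) (hr : r < 1) : ‖c * x / (y - u)‖ ≤ ‖x‖ / (1 - r) := by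
  have hden : 1 - r ≤ ‖y - u‖ := by
    calc 1 - r ≤ ‖u‖ - ‖y‖ := by rw [hu]; linarith
      _ ≤ ‖y - u‖ := norm_sub_rev y u ▸ norm_sub_norm_le u y
  rw [norm_div, norm_mul, hc, one_mul]
  gcongr

lemma IsPrimitiveRoot.sq_add_self_add_one_ne_zero {w x : ℂ} (hw : IsPrimitiveRoot w 3)
    (hx : ‖x‖ < 1) : x ^ 2 + x + 1 ≠ 0 := by
  have hw1 : ‖w‖ = 1 := hw.norm'_eq_one three_ne_zero
  have hne : ∀ u : ℂ, ‖u‖ = 1 → x - u ≠ 0 := fun u hu ↦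
    sub_ne_zero.2 (ne_of_apply_ne norm (hx.trans_eq hu.symm).ne)
  rw [show x ^ 2 + x + 1 = (x - w) * (x - w ^ 2) by
    linear_combination (1 - w + x) * hw.sq_add_self_add_one]
  exact mul_ne_zero (hne w hw1) (hne _ (by rw [norm_pow, hw1, one_pow]))

theorem IsPrimitiveRoot.summable_inv_mul_div_add_mul_div {w z : ℂ} (hw : IsPrimitiveRoot w 3)
    (hz : ‖z‖ < 1) :
    Summable fun h : ℕ ↦ w⁻¹ * z ^ 2 ^ h / (z ^ 2 ^ (h + 1) - w) +
      w * z ^ 2 ^ h / (z ^ 2 ^ (h + 1) - w ^ 2) := by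
  have hw1 : ‖w‖ = 1 := hw.norm'_eq_one three_ne_zero
  have hw2 : ‖w ^ 2‖ = 1 := by rw [norm_pow, hw1, one_pow]
  have hw_inv : ‖w⁻¹‖ = 1 := by rw [norm_inv, hw1, inv_one]
  have hle_self (n : ℕ) : ‖z ^ 2 ^ (n + 1)‖ ≤ ‖z‖ := by
    rw [norm_pow]; exact pow_le_of_le_one (norm_nonneg _) hz.le (by positivity)
  have hle_geom (n : ℕ) : ‖z ^ 2 ^ n‖ ≤ ‖z‖ ^ n := by
    rw [norm_pow]; exact pow_le_pow_of_le_one (norm_nonneg _) hz.le Nat.lt_two_pow_self.le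
  refine Summable.of_norm_bounded
    ((summable_geometric_of_lt_one (norm_nonneg z) hz).mul_left (2 / (1 - ‖z‖))) fun n ↦ ?_
  calc _ ≤ ‖z ^ 2 ^ n‖ / (1 - ‖z‖) + ‖z ^ 2 ^ n‖ / (1 - ‖z‖) :=
        (norm_add_le _ _).trans (add_le_add
          (norm_mul_div_sub_le hw_inv hw1 (hle_self n) hz)
          (norm_mul_div_sub_le hw1 hw2 (hle_self n) hz))
    _ ≤ ‖z‖ ^ n / (1 - ‖z‖) + ‖z‖ ^ n / (1 - ‖z‖) := by gcongr <;> exact hle_geom n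
    _ = 2 / (1 - ‖z‖) * ‖z‖ ^ n := by ring

theorem IsPrimitiveRoot.hasSum_inv_mul_div_add_mul_div {w z : ℂ} (hw : IsPrimitiveRoot w 3)
    (hz : ‖z‖ < 1) :
    HasSum (fun h : ℕ ↦ w⁻¹ * z ^ 2 ^ h / (z ^ 2 ^ (h + 1) - w) +
      w * z ^ 2 ^ h / (z ^ 2 ^ (h + 1) - w ^ 2)) ((2 * z ^ 2 + z) / (z ^ 2 + z + 1)) := by
  have hw1 : ‖w‖ = 1 := hw.norm'_eq_one three_ne_zero
  have hw2 : ‖w ^ 2‖ = 1 := by rw [norm_pow, hw1, one_pow]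
  have hle_self (n : ℕ) : ‖z ^ 2 ^ n‖ ≤ ‖z‖ := by
    rw [norm_pow]; exact pow_le_of_le_one (norm_nonneg _) hz.le (by positivity)
  have hsq (n : ℕ) : z ^ 2 ^ (n + 1) = (z ^ 2 ^ n) ^ 2 := by rw [pow_succ, pow_mul]
  set g : ℂ → ℂ := fun x ↦ (2 * x ^ 2 + x) / (x ^ 2 + x + 1) with hg
  have hterm (n : ℕ) : w⁻¹ * z ^ 2 ^ n / (z ^ 2 ^ (n + 1) - w) +
      w * z ^ 2 ^ n / (z ^ 2 ^ (n + 1) - w ^ 2) = g (z ^ 2 ^ n) - g (z ^ 2 ^ (n + 1)) := by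
    have hx2 : ‖(z ^ 2 ^ n) ^ 2‖ < 1 := (hsq n ▸ hle_self (n + 1)).trans_lt hz
    rw [hsq]
    exact partial_fractions_cube_root hw.sq_add_self_add_one
      (ne_of_apply_ne norm (hx2.trans_eq hw1.symm).ne)
      (ne_of_apply_ne norm (hx2.trans_eq hw2.symm).ne)
      (hw.sq_add_self_add_one_ne_zero ((hle_self n).trans_lt hz))
  have hlim : Tendsto (fun n ↦ g (z ^ 2 ^ n)) atTop (𝓝 0) := by
    have hg_cont : ContinuousAt g 0 := ContinuousAt.div (by fun_prop) (by fun_prop) (by norm_num)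
    have hg_zero : g 0 = 0 := by simp [hg]
    exact hg_zero ▸ hg_cont.tendsto.comp <| (tendsto_pow_atTop_nhds_zero_of_norm_lt_one hz).comp
      (tendsto_pow_atTop_atTop_of_one_lt one_lt_two)
  have hsummable := hw.summable_inv_mul_div_add_mul_div hz
  simp_rw [hterm] at hsummable ⊢
  simpa [hg] using hsummable.hasSum_sub_succ_of_tendsto hlim

lemma isPrimitiveRoot_exp_pi_mul_I_div_three_sq :
    IsPrimitiveRoot (exp (Real.pi * I / 3) ^ 2) 3 := by
  rw [← exp_nat_mul]
  convert isPrimitiveRoot_exp 3 three_ne_zero using 2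
  push_cast
  ring

open Complex in
theorem reciprocal_sum_case3 (z : ℂ) (hz : ‖z‖ < 1) :
    ∑' h : ℕ,
      ((Complex.exp (Real.pi * Complex.I / 3) ^ 2)⁻¹ * z ^ 2 ^ h /
          (z ^ 2 ^ (h + 1) - Complex.exp (Real.pi * Complex.I / 3) ^ 2) +
        Complex.exp (Real.pi * Complex.I / 3) ^ 2 * z ^ 2 ^ h /
          (z ^ 2 ^ (h + 1) - Complex.exp (Real.pi * Complex.I / 3) ^ 4)) =
      (2 * z ^ 2 + z) / (z ^ 2 + z + 1) := by
  have h4 : Complex.exp (Real.pi * Complex.I / 3) ^ 4 =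
      (Complex.exp (Real.pi * Complex.I / 3) ^ 2) ^ 2 := by ring
  rw [h4]
  exact (isPrimitiveRoot_exp_pi_mul_I_div_three_sq.hasSum_inv_mul_div_add_mul_div hz).tsum_eq
end

section
/- Let ζ := e^{πi/3}. For every complex number z with |z| < 1, Σ_{h=0}^∞ (−1)^h ( (1/(1+ζ))·z^{2^h}/(z^{2^{h+1}} − ζ²) + (ζ/(1+ζ))·z^{2^h}/(z^{2^{h+1}} − ζ⁴) ) = z/(z² + z + 1). -/
/-!
Since ζ = e^{πi/3} is a primitive sixth root of unity, ζ² − ζ + 1 = 0, and ζ², ζ⁴ are the two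
roots of v² + v + 1. Partial fractions in v = w² turn the `h`-th summand, with w = z^{2^h}, into
(−1)^h w(w² + 1)/(w⁴ + w² + 1) = (−1)^h (g(w) + g(w²)) where g(w) = w/(w² + w + 1), using
w⁴ + w² + 1 = (w² + w + 1)(w² − w + 1). So the series telescopes to g(z); it converges
absolutely because |w² + w + 1| · |1 − w| = |1 − w³| ≥ 1 − |w| on the unit disc.
-/

open Complex

theorem Summable.hasSum_sub_succ {G : Type*} [AddCommGroup G] [TopologicalSpace G]
    [IsTopologicalAddGroup G] {u : ℕ → G} (hu : Summable u) :
    HasSum (fun n ↦ u n - u (n + 1)) (u 0) := by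
  have h := ((summable_nat_add_iff 1).2 hu).hasSum
  simpa using h.zero_add.sub h

section UnitDisc

variable {𝕜 : Type*} [NormedField 𝕜] {w : 𝕜}

lemma one_sub_norm_le_two_mul_norm_sq_add_add_one (hw : ‖w‖ ≤ 1) :
    1 - ‖w‖ ≤ 2 * ‖w ^ 2 + w + 1‖ := by
  calc 1 - ‖w‖ ≤ 1 - ‖w‖ ^ 3 := by
        gcongr; exact pow_le_of_le_one (norm_nonneg w) hw three_ne_zero
    _ ≤ ‖1 - w ^ 3‖ := by
        rw [← norm_pow]; linarith [norm_sub_norm_le (1 : 𝕜) (w ^ 3), norm_one (α := 𝕜)]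
    _ = ‖1 - w‖ * ‖w ^ 2 + w + 1‖ := by rw [← norm_mul]; ring_nf
    _ ≤ 2 * ‖w ^ 2 + w + 1‖ := by
        gcongr
        calc ‖1 - w‖ ≤ ‖(1 : 𝕜)‖ + ‖w‖ := norm_sub_le _ _
          _ ≤ 2 := by rw [norm_one]; linarith

lemma sq_add_add_one_ne_zero_of_norm_lt_one (hw : ‖w‖ < 1) : w ^ 2 + w + 1 ≠ 0 := by
  intro h
  have := one_sub_norm_le_two_mul_norm_sq_add_add_one hw.le
  rw [h, norm_zero] at this
  linarith

lemma norm_div_sq_add_add_one_le (hw : ‖w‖ < 1) :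
    ‖w / (w ^ 2 + w + 1)‖ ≤ 2 * ‖w‖ / (1 - ‖w‖) := by
  have hden := norm_pos_iff.2 (sq_add_add_one_ne_zero_of_norm_lt_one hw)
  rw [norm_div, div_le_div_iff₀ hden (by linarith)]
  have := one_sub_norm_le_two_mul_norm_sq_add_add_one hw.le
  nlinarith [norm_nonneg w]

lemma summable_norm_div_sq_add_add_one_pow_two_pow {z : 𝕜} (hz : ‖z‖ < 1) :
    Summable fun h : ℕ ↦ ‖z ^ 2 ^ h / ((z ^ 2 ^ h) ^ 2 + z ^ 2 ^ h + 1)‖ := by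
  refine .of_nonneg_of_le (fun _ ↦ norm_nonneg _) (fun h ↦ ?_)
    ((summable_geometric_of_lt_one (norm_nonneg z) hz).mul_left (2 / (1 - ‖z‖)))
  have hle : ‖z ^ 2 ^ h‖ ≤ ‖z‖ ^ h := by
    rw [norm_pow]
    exact pow_le_pow_of_le_one (norm_nonneg z) hz.le Nat.lt_two_pow_self.le
  have hle' : ‖z ^ 2 ^ h‖ ≤ ‖z‖ := by
    rw [norm_pow]
    exact pow_le_of_le_one (norm_nonneg z) hz.le (by positivity)
  calc _ ≤ 2 * ‖z ^ 2 ^ h‖ / (1 - ‖z ^ 2 ^ h‖) :=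
        norm_div_sq_add_add_one_le (hle'.trans_lt hz)
    _ ≤ 2 * ‖z‖ ^ h / (1 - ‖z‖) := by gcongr
    _ = 2 / (1 - ‖z‖) * ‖z‖ ^ h := by ring

end UnitDisc

section SixthRoot

variable {K : Type*} [Field K] {ζ : K}

lemma one_add_ne_zero_of_sq_sub_add_one_eq_zero [CharZero K] (hζ : ζ ^ 2 - ζ + 1 = 0) :
    1 + ζ ≠ 0 := by
  intro h
  rw [eq_neg_of_add_eq_zero_right h] at hζ
  norm_num at hζ

lemma div_sub_sq_add_div_sub_pow_four [CharZero K] (hζ : ζ ^ 2 - ζ + 1 = 0) {v : K}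
    (h2 : v - ζ ^ 2 ≠ 0) (h4 : v - ζ ^ 4 ≠ 0) :
    1 / (1 + ζ) / (v - ζ ^ 2) + ζ / (1 + ζ) / (v - ζ ^ 4) = (v + 1) / (v ^ 2 + v + 1) := by
  have h1 := one_add_ne_zero_of_sq_sub_add_one_eq_zero hζ
  have hfac : v ^ 2 + v + 1 = (v - ζ ^ 2) * (v - ζ ^ 4) := by
    linear_combination (v * (ζ ^ 2 + ζ + 1) + (1 - ζ ^ 3) * (1 + ζ)) * hζ
  rw [hfac]
  field_simp
  linear_combination (-(1 + ζ) ^ 2) * hζ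

end SixthRoot

lemma norm_eq_one_of_sq_sub_add_one_eq_zero {𝕜 : Type*} [NormedField 𝕜] {ζ : 𝕜}
    (hζ : ζ ^ 2 - ζ + 1 = 0) : ‖ζ‖ = 1 := by
  have h3 : ζ ^ 3 = -1 := by linear_combination (ζ + 1) * hζ
  have : ‖ζ‖ ^ 3 = 1 := by rw [← norm_pow, h3, norm_neg, norm_one]
  exact (pow_eq_one_iff_of_nonneg (norm_nonneg ζ) three_ne_zero).1 this

lemma exp_pi_mul_I_div_three_sq_sub_add_one_eq_zero :
    exp (Real.pi * I / 3) ^ 2 - exp (Real.pi * I / 3) + 1 = 0 := by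
  have h := (isPrimitiveRoot_exp 6 (by norm_num)).isRoot_cyclotomic (by norm_num)
  rw [show 2 * (Real.pi : ℂ) * I / (6 : ℕ) = Real.pi * I / 3 by push_cast; ring] at h
  simpa [Polynomial.cyclotomic_six] using h

lemma summand_eq_div_add_div_sq {ζ : ℂ} (hζ : ζ ^ 2 - ζ + 1 = 0) {w : ℂ}
    (hw : ‖w‖ < 1) :
    1 / (1 + ζ) * w / (w ^ 2 - ζ ^ 2) + ζ / (1 + ζ) * w / (w ^ 2 - ζ ^ 4) =
      w / (w ^ 2 + w + 1) + w ^ 2 / ((w ^ 2) ^ 2 + w ^ 2 + 1) := by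
  have hw2 : ‖w ^ 2‖ < 1 := by rw [norm_pow]; exact pow_lt_one₀ (norm_nonneg w) hw two_ne_zero
  have hne {k : ℕ} (hk : k ≠ 0) : w ^ 2 - ζ ^ k ≠ 0 := by
    refine sub_ne_zero.2 fun h ↦ hw2.ne ?_
    rw [h, norm_pow, norm_eq_one_of_sq_sub_add_one_eq_zero hζ, one_pow]
  have hpos := sq_add_add_one_ne_zero_of_norm_lt_one hw
  have hneg : w ^ 2 - w + 1 ≠ 0 := by
    simpa [sub_eq_add_neg] using
      sq_add_add_one_ne_zero_of_norm_lt_one (w := -w) (by rwa [norm_neg])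
  calc _ = w * (1 / (1 + ζ) / (w ^ 2 - ζ ^ 2) + ζ / (1 + ζ) / (w ^ 2 - ζ ^ 4)) := by ring
    _ = w * ((w ^ 2 + 1) / ((w ^ 2) ^ 2 + w ^ 2 + 1)) := by
        rw [div_sub_sq_add_div_sub_pow_four hζ (hne two_ne_zero) (hne four_ne_zero)]
    _ = _ := by
        have hquartic : (w ^ 2) ^ 2 + w ^ 2 + 1 ≠ 0 := by
          rw [show (w ^ 2) ^ 2 + w ^ 2 + 1 = (w ^ 2 + w + 1) * (w ^ 2 - w + 1) by ring]
          exact mul_ne_zero hpos hneg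
        rw [div_add_div _ _ hpos hquartic, mul_div_assoc',
          div_eq_div_iff hquartic (mul_ne_zero hpos hquartic)]
        ring

theorem hasSum_alternating_of_sq_sub_add_one_eq_zero {ζ : ℂ} (hζ : ζ ^ 2 - ζ + 1 = 0)
    {z : ℂ} (hz : ‖z‖ < 1) :
    HasSum (fun h : ℕ ↦ (-1 : ℂ) ^ h *
      (1 / (1 + ζ) * z ^ 2 ^ h / (z ^ 2 ^ (h + 1) - ζ ^ 2) +
        ζ / (1 + ζ) * z ^ 2 ^ h / (z ^ 2 ^ (h + 1) - ζ ^ 4))) (z / (z ^ 2 + z + 1)) := by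
  set u : ℕ → ℂ := fun h ↦ (-1) ^ h * (z ^ 2 ^ h / ((z ^ 2 ^ h) ^ 2 + z ^ 2 ^ h + 1))
  have hu : Summable u := .of_norm <| by
    simpa [u] using summable_norm_div_sq_add_add_one_pow_two_pow hz
  have hu0 : u 0 = z / (z ^ 2 + z + 1) := by simp [u]
  refine hu0 ▸ hu.hasSum_sub_succ.congr_fun fun h ↦ ?_
  have hw : ‖z ^ 2 ^ h‖ < 1 := by
    rw [norm_pow]
    exact pow_lt_one₀ (norm_nonneg z) hz (by positivity)
  rw [pow_succ, pow_mul, summand_eq_div_add_div_sq hζ hw]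
  simp only [u, pow_succ, pow_mul]
  ring

open Complex in
theorem reciprocal_sum_case4 (z : ℂ) (hz : ‖z‖ < 1) :
    ∑' h : ℕ,
      (-1 : ℂ) ^ h *
        ((1 / (1 + Complex.exp (Real.pi * Complex.I / 3))) * z ^ 2 ^ h /
            (z ^ 2 ^ (h + 1) - Complex.exp (Real.pi * Complex.I / 3) ^ 2) +
          (Complex.exp (Real.pi * Complex.I / 3) /
              (1 + Complex.exp (Real.pi * Complex.I / 3))) * z ^ 2 ^ h /
            (z ^ 2 ^ (h + 1) - Complex.exp (Real.pi * Complex.I / 3) ^ 4)) =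
      z / (z ^ 2 + z + 1) :=
  (hasSum_alternating_of_sq_sub_add_one_eq_zero
    exp_pi_mul_I_div_three_sq_sub_add_one_eq_zero hz).tsum_eq
end

section
/- Let r ≥ 2 be an integer, a a non-zero complex number, and A ∈ ℂ[z] a non-zero polynomial with A(0) = 0 and deg A ≤ r−1. Then the formal power series g(z) := Σ_{h=0}^∞ a^h A(z^{r^h}) is not rational. -/
noncomputable section

/-!
The `h`-th summand `a^h A(z^{r^h})` is supported in `[r^h, (deg A) r^h]`, so the coefficients of
`g` vanish on the gaps `((deg A) r^h, r^{h+1})`, whose lengths tend to infinity, while beyond every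
gap there is a nonzero coefficient, `a^h` times the leading coefficient of `A` at `(deg A) r^h`.
If `Q g = P`, the coefficients of `g` beyond `deg P` satisfy a linear recurrence of order `deg Q`,
so a run of `deg Q` zeros there forces all later coefficients to vanish.
-/

open scoped Polynomial PowerSeries

namespace PowerSeries

variable {R : Type*} [CommSemiring R] [NoZeroDivisors R] {P Q : R[X]} {g : R⟦X⟧}

theorem coeff_eq_zero_of_mul_eq_of_coeff_eq_zero_below (hQ : Q ≠ 0) (hPQ : (Q : R⟦X⟧) * g = P)
    {m : ℕ} (hm : P.natDegree < m) (hbelow : ∀ k < m, m - Q.natDegree ≤ k → coeff k g = 0) :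
    coeff m g = 0 := by
  -- compare the coefficients of `X^(v + m)`, where `v` is the trailing degree of `Q`
  set v := Q.natTrailingDegree
  have hcoeff : coeff (v + m) ((Q : R⟦X⟧) * g) = Q.coeff v * coeff m g := by
    rw [coeff_mul]
    simp only [Polynomial.coeff_coe]
    refine Finset.sum_eq_single_of_mem (v, m) (by simp) ?_
    rintro ⟨i, k⟩ hik hne
    rw [Finset.HasAntidiagonal.mem_antidiagonal] at hik
    rcases lt_or_ge i v with hi | hi
    · rw [Polynomial.coeff_eq_zero_of_lt_natTrailingDegree hi, zero_mul]
    rcases lt_or_ge Q.natDegree i with hd | hd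
    · rw [Polynomial.coeff_eq_zero_of_natDegree_lt hd, zero_mul]
    rcases hi.eq_or_lt with hiv | hiv
    · exact absurd (Prod.ext hiv.symm (by omega)) hne
    · rw [hbelow k (by omega) (by omega), mul_zero]
  rw [hPQ, Polynomial.coeff_coe, Polynomial.coeff_eq_zero_of_natDegree_lt (by omega)] at hcoeff
  exact (mul_eq_zero.mp hcoeff.symm).resolve_left
    (Polynomial.trailingCoeff_nonzero_iff_nonzero.mpr hQ)

theorem coeff_eq_zero_of_mul_eq_of_coeff_eq_zero_on_window (hQ : Q ≠ 0)
    (hPQ : (Q : R⟦X⟧) * g = P) {N : ℕ} (hN : P.natDegree < N)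
    (hwindow : ∀ k, N ≤ k → k < N + Q.natDegree → coeff k g = 0) {m : ℕ} (hm : N ≤ m) :
    coeff m g = 0 := by
  induction m using Nat.strong_induction_on with
  | _ m ih =>
    by_cases hm' : m < N + Q.natDegree
    · exact hwindow m hm hm'
    · exact coeff_eq_zero_of_mul_eq_of_coeff_eq_zero_below hQ hPQ (by omega)
        fun k hk hk' => ih k hk (by omega)

end PowerSeries

namespace Polynomial

variable {R : Type*} [CommSemiring R] {A : R[X]} {p r h n : ℕ}

theorem mem_Icc_of_coeff_expand_ne_zero (hA0 : A.coeff 0 = 0) (hp : 0 < p)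
    (hn : (expand R p A).coeff n ≠ 0) : n ∈ Set.Icc p (A.natDegree * p) := by
  have hle : n ≤ A.natDegree * p := natDegree_expand p A ▸ le_natDegree_of_ne_zero hn
  rw [coeff_expand hp] at hn
  split_ifs at hn with hdvd
  · have hn0 : n ≠ 0 := by rintro rfl; simp [hA0] at hn
    exact ⟨Nat.le_of_dvd (Nat.pos_of_ne_zero hn0) hdvd, hle⟩
  · exact absurd rfl hn

theorem log_eq_of_coeff_expand_pow_ne_zero (hA0 : A.coeff 0 = 0) (hdeg : A.natDegree < r)
    (hn : (expand R (r ^ h) A).coeff n ≠ 0) : Nat.log r n = h := by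
  have hpow : 0 < r ^ h := pow_pos (by omega) h
  obtain ⟨hlo, hhi⟩ := mem_Icc_of_coeff_expand_ne_zero hA0 hpow hn
  refine Nat.log_eq_of_pow_le_of_lt_pow hlo (hhi.trans_lt ?_)
  rw [pow_succ']
  exact Nat.mul_lt_mul_of_pos_right hdeg hpow

end Polynomial

open Polynomial

def mahlerSeries (r : ℕ) (a : ℂ) (A : ℂ[X]) : ℂ⟦X⟧ :=
  seriesSum fun h => PowerSeries.C (a ^ h) * ((A.comp (X ^ r ^ h) : ℂ[X]) : ℂ⟦X⟧)

section mahlerSeries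

variable {r : ℕ} {a : ℂ} {A : ℂ[X]}

theorem coeff_mahlerSeries (hA0 : A.coeff 0 = 0) (hdeg : A.natDegree < r) (n : ℕ) :
    PowerSeries.coeff n (mahlerSeries r a A) =
      a ^ Nat.log r n * (expand ℂ (r ^ Nat.log r n) A).coeff n := by
  have hterm : ∀ h, PowerSeries.coeff n
      (PowerSeries.C (a ^ h) * ((A.comp (X ^ r ^ h) : ℂ[X]) : ℂ⟦X⟧)) =
      a ^ h * (expand ℂ (r ^ h) A).coeff n := fun h => by
    rw [PowerSeries.coeff_C_mul, ← expand_eq_comp_X_pow, coeff_coe]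
  rw [mahlerSeries, seriesSum, PowerSeries.coeff_mk, tsum_eq_single (Nat.log r n), hterm]
  intro h hh
  by_contra hne
  have hexpand := right_ne_zero_of_mul (hterm h ▸ hne)
  exact hh (log_eq_of_coeff_expand_pow_ne_zero hA0 hdeg hexpand).symm

theorem coeff_mahlerSeries_eq_zero (hA0 : A.coeff 0 = 0) (hdeg : A.natDegree < r) {h n : ℕ}
    (hlo : A.natDegree * r ^ h < n) (hhi : n < r ^ (h + 1)) :
    PowerSeries.coeff n (mahlerSeries r a A) = 0 := by
  have hlog : Nat.log r n ≤ h := Nat.lt_succ_iff.mp (Nat.log_lt_of_lt_pow (by omega) hhi)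
  rw [coeff_mahlerSeries hA0 hdeg, coeff_eq_zero_of_natDegree_lt, mul_zero]
  calc (expand ℂ (r ^ Nat.log r n) A).natDegree = A.natDegree * r ^ Nat.log r n :=
        natDegree_expand _ _
    _ ≤ A.natDegree * r ^ h := Nat.mul_le_mul_left _ (Nat.pow_le_pow_right (by omega) hlog)
    _ < n := hlo

theorem coeff_mahlerSeries_natDegree_mul_pow (hA0 : A.coeff 0 = 0) (hdeg : A.natDegree < r)
    (h : ℕ) :
    PowerSeries.coeff (A.natDegree * r ^ h) (mahlerSeries r a A) = a ^ h * A.leadingCoeff := by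
  have hcoeff : (expand ℂ (r ^ h) A).coeff (A.natDegree * r ^ h) = A.leadingCoeff :=
    coeff_expand_mul (pow_pos (by omega) h) _ _
  rw [coeff_mahlerSeries hA0 hdeg]
  by_cases hA : A.leadingCoeff = 0
  · simp [leadingCoeff_eq_zero.mp hA]
  · rw [log_eq_of_coeff_expand_pow_ne_zero hA0 hdeg (hcoeff ▸ hA), hcoeff]

end mahlerSeries

theorem polynomial_mahler_series_not_rational_general
    (r : ℕ) (a : ℂ) (ha : a ≠ 0)
    (A : Polynomial ℂ) (hA : A ≠ 0) (hA0 : A.coeff 0 = 0)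
    (hdeg : A.natDegree ≤ r - 1) :
    ¬ IsRationalPS
      (seriesSum fun h =>
        PowerSeries.C (a ^ h) * ((A.comp (Polynomial.X ^ r ^ h) : Polynomial ℂ) :
          PowerSeries ℂ)) := by
  rintro ⟨P, Q, hQ, hPQ⟩
  change (Q : ℂ⟦X⟧) * mahlerSeries r a A = P at hPQ
  have hA1 : 1 ≤ A.natDegree := by
    by_contra h0
    exact hA (by rw [eq_C_of_natDegree_eq_zero (p := A) (by omega), hA0, map_zero])
  have hdeg' : A.natDegree < r := by omega
  -- for such `h` the gap `((deg A) r^h, r^(h+1))` starts beyond `deg P` and is longer than `deg Q`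
  obtain ⟨h, hh⟩ : ∃ h, Q.natDegree + P.natDegree < r ^ h :=
    ⟨_, Nat.lt_pow_self (by omega)⟩
  have hgap : A.natDegree * r ^ h + r ^ h ≤ r ^ (h + 1) :=
    calc A.natDegree * r ^ h + r ^ h = (A.natDegree + 1) * r ^ h := by ring
      _ ≤ r * r ^ h := Nat.mul_le_mul_right _ hdeg'
      _ = r ^ (h + 1) := (pow_succ' r h).symm
  have hpow_le : ∀ e, r ^ e ≤ A.natDegree * r ^ e := fun e => Nat.le_mul_of_pos_left _ hA1
  have hwindow : ∀ k, A.natDegree * r ^ h + 1 ≤ k →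
      k < A.natDegree * r ^ h + 1 + Q.natDegree → PowerSeries.coeff k (mahlerSeries r a A) = 0 :=
    fun k hk hk' => coeff_mahlerSeries_eq_zero hA0 hdeg' (h := h) (by omega) (by omega)
  have hzero := PowerSeries.coeff_eq_zero_of_mul_eq_of_coeff_eq_zero_on_window hQ hPQ
    (by have := hpow_le h; omega) hwindow (m := A.natDegree * r ^ (h + 1))
    (by have := hpow_le (h + 1); omega)
  rw [coeff_mahlerSeries_natDegree_mul_pow hA0 hdeg'] at hzero
  exact mul_ne_zero (pow_ne_zero _ ha) (leadingCoeff_ne_zero.mpr hA) hzero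

theorem polynomial_mahler_series_not_rational
    (r : ℕ) (hr : 2 ≤ r) (a : ℂ) (ha : a ≠ 0)
    (A : Polynomial ℂ) (hA : A ≠ 0) (hA0 : A.coeff 0 = 0)
    (hdeg : A.natDegree ≤ r - 1) :
    ¬ IsRationalPS
      (seriesSum fun h =>
        PowerSeries.C (a ^ h) * ((A.comp (Polynomial.X ^ r ^ h) : Polynomial ℂ) :
          PowerSeries ℂ)) :=
  polynomial_mahler_series_not_rational_general r a ha A hA hA0 hdeg
end
end
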